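/- arXiv:2503.13361 — 8 statements merged into one kernel-verified Lean document; each statement's English description precedes it below -/
import Mathlib

section
/- There exists a unique vector w ∈ ℝ^n with w_j > 0 for all j = 1,…,n such that w lies in the row span of A (i.e. w = Aᵀu for some u ∈ ℝ^m) and A(1/w) = b, where (1/w)_j := 1/w_j. Equivalently, w is the unique positive vector in the row span of A for which the mean vector (1/w_1,…,1/w_n) of the product-exponential measure P_{n,w} lies in K_n. -/
/-!
Maximize `∏ j, x j` over the compact polytope `K = {x ≥ 0 | A x = b}`. Since `K` contains a
positive point, the maximizer `x` is positive, hence a critical point of `∑ j, log (x j)` along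
`ker A`: the gradient `x⁻¹` annihilates `ker A`, i.e. lies in the row space of `A`, and `w = x⁻¹`
works. If `w, w'` both work, then `w - w'` lies in the row space while `w'⁻¹ - w⁻¹ ∈ ker A`, so
`∑ j, (w j - w' j) * (w' j⁻¹ - w j⁻¹) = 0`; its terms `(w j - w' j)² / (w j * w' j)` are
nonnegative, hence all vanish.
-/

open Matrix Filter Topology

theorem Matrix.exists_vecMul_eq_of_dotProduct_eq_zero {K m n : Type*} [Field K] [Fintype m]
    [Fintype n] (A : Matrix m n K) (v : n → K) (h : ∀ x, A *ᵥ x = 0 → v ⬝ᵥ x = 0) :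
    ∃ u, u ᵥ* A = v := by
  classical
  have hv : dotProductEquiv K n v ∈ LinearMap.range A.mulVecLin.dualMap := by
    rw [LinearMap.range_dualMap_eq_dualAnnihilator_ker, Submodule.mem_dualAnnihilator]
    exact fun x hx => h x hx
  obtain ⟨ψ, hψ⟩ := hv
  refine ⟨(dotProductEquiv K m).symm ψ, (dotProductEquiv K n).injective (LinearMap.ext fun x => ?_)⟩
  have hu := LinearMap.congr_fun ((dotProductEquiv K m).apply_symm_apply ψ) (A *ᵥ x)
  simp only [dotProductEquiv_apply_apply] at hu
  simpa [← dotProduct_mulVec, hu] using LinearMap.congr_fun hψ x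

theorem eq_of_dotProduct_sub_inv_sub_eq_zero {ι : Type*} [Fintype ι] {w w' : ι → ℝ}
    (hw : ∀ j, 0 < w j) (hw' : ∀ j, 0 < w' j) (h : (w - w') ⬝ᵥ (w'⁻¹ - w⁻¹) = 0) : w = w' := by
  have hterm : ∀ j, (w j - w' j) * ((w' j)⁻¹ - (w j)⁻¹) = (w j - w' j) ^ 2 / (w j * w' j) := by
    intro j
    field_simp [(hw j).ne', (hw' j).ne']
  have hzero := (Finset.sum_eq_zero_iff_of_nonneg fun j _ => by
    simp only [Pi.sub_apply, Pi.inv_apply, hterm]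
    exact div_nonneg (sq_nonneg _) (mul_pos (hw j) (hw' j)).le).1 h
  funext j
  have hj := hzero j (Finset.mem_univ j)
  simp only [Pi.sub_apply, Pi.inv_apply, hterm, div_eq_zero_iff,
    (mul_pos (hw j) (hw' j)).ne', or_false, pow_eq_zero_iff two_ne_zero, sub_eq_zero] at hj
  exact hj

theorem Matrix.vecMul_eq_of_mulVec_inv_eq {m n : Type*} [Fintype m] [Fintype n] {A : Matrix m n ℝ}
    {u u' : m → ℝ} (hw : ∀ j, 0 < (u ᵥ* A) j) (hw' : ∀ j, 0 < (u' ᵥ* A) j)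
    (h : A *ᵥ (u ᵥ* A)⁻¹ = A *ᵥ (u' ᵥ* A)⁻¹) : u ᵥ* A = u' ᵥ* A := by
  refine eq_of_dotProduct_sub_inv_sub_eq_zero hw hw' ?_
  rw [← sub_vecMul, ← dotProduct_mulVec, mulVec_sub, h, sub_self, dotProduct_zero]

theorem Matrix.isCompact_setOf_nonneg_mulVec_eq {m n : Type*} [Fintype n] (A : Matrix m n ℝ)
    (b : m → ℝ) (i : m) (hA : ∀ j, 0 < A i j) : IsCompact {x : n → ℝ | 0 ≤ x ∧ A *ᵥ x = b} := by
  refine (isCompact_Icc (a := 0) (b := fun j => b i / A i j)).of_isClosed_subset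
    ((isClosed_le continuous_const continuous_id).inter
      (isClosed_eq (Continuous.matrix_mulVec continuous_const continuous_id) continuous_const)) ?_
  rintro x ⟨hx, rfl⟩
  refine ⟨hx, fun j => (le_div_iff₀ (hA j)).2 ?_⟩
  rw [mul_comm]
  exact Finset.single_le_sum (f := fun k => A i k * x k)
    (fun k _ => mul_nonneg (hA k).le (hx k)) (Finset.mem_univ j)

theorem eventually_forall_pos_add_smul {ι : Type*} [Finite ι] {x : ι → ℝ} (hx : ∀ j, 0 < x j)
    (v : ι → ℝ) : ∀ᶠ t in 𝓝 (0 : ℝ), ∀ j, 0 < (x + t • v) j := by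
  refine eventually_all.2 fun j => ?_
  have hcont : Continuous fun t : ℝ => (x + t • v) j := by fun_prop
  simpa using hcont.continuousAt.eventually (eventually_gt_nhds (by simpa using hx j))

theorem pos_of_isMaxOn_prod {ι : Type*} [Fintype ι] {K : Set (ι → ℝ)} {x y : ι → ℝ}
    (hx : 0 ≤ x) (hyK : y ∈ K) (hy : ∀ j, 0 < y j) (hmax : IsMaxOn (fun z => ∏ j, z j) K x)
    (j : ι) : 0 < x j := by
  have hprod : 0 < ∏ k, x k := (Finset.prod_pos fun k _ => hy k).trans_le (hmax hyK)
  exact (hx j).lt_of_ne fun hj => hprod.ne' (Finset.prod_eq_zero (Finset.mem_univ j) hj.symm)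

theorem dotProduct_inv_eq_zero_of_isMaxOn_prod {ι : Type*} [Fintype ι] {K : Set (ι → ℝ)}
    {x v : ι → ℝ} (hx : ∀ j, 0 < x j) (hmax : IsMaxOn (fun z => ∏ j, z j) K x)
    (hline : ∀ᶠ t in 𝓝 (0 : ℝ), x + t • v ∈ K) : v ⬝ᵥ x⁻¹ = 0 := by
  let g : ℝ → ℝ := fun t => ∑ j, Real.log (x j + t * v j)
  have hderiv : HasDerivAt g (v ⬝ᵥ x⁻¹) 0 := by
    have := HasDerivAt.fun_sum (u := Finset.univ) fun j _ =>
      ((hasDerivAt_mul_const (v j)).const_add (x j)).log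
        (by simpa using (hx j).ne' : x j + 0 * v j ≠ 0)
    simpa [dotProduct, div_eq_mul_inv] using this
  have hlocal : IsLocalMax g 0 := by
    filter_upwards [eventually_forall_pos_add_smul hx v, hline] with t hpos htK
    have hprod := Real.log_le_log (Finset.prod_pos fun j _ => hpos j) (hmax htK)
    simp only [Pi.add_apply, Pi.smul_apply, smul_eq_mul] at hpos hprod
    simpa [g, Real.log_prod fun j _ => (hpos j).ne', Real.log_prod fun j _ => (hx j).ne']
      using hprod
  exact hlocal.hasDerivAt_eq_zero hderiv

theorem exists_unique_barycenter_weights_general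
    (m n : ℕ) (hm : 0 < m)
    (A : Matrix (Fin m) (Fin n) ℝ) (hApos : ∀ i j, 0 < A i j)
    (b : Fin m → ℝ)
    (hint : ∃ x : Fin n → ℝ, (∀ j, 0 < x j) ∧ A.mulVec x = b) :
    ∃! w : Fin n → ℝ,
      (∀ j, 0 < w j) ∧
      (∃ u : Fin m → ℝ, w = A.transpose.mulVec u) ∧
      A.mulVec (fun j => (w j)⁻¹) = b := by
  obtain ⟨x₀, hx₀, hAx₀⟩ := hint
  set K := {x : Fin n → ℝ | 0 ≤ x ∧ A *ᵥ x = b}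
  have hx₀K : x₀ ∈ K := ⟨fun j => (hx₀ j).le, hAx₀⟩
  obtain ⟨x, hxK, hmax⟩ := (A.isCompact_setOf_nonneg_mulVec_eq b ⟨0, hm⟩ (hApos _)).exists_isMaxOn
    ⟨x₀, hx₀K⟩ (continuous_finsetProd _ fun j _ => continuous_apply j).continuousOn
  have hx := pos_of_isMaxOn_prod hxK.1 hx₀K hx₀ hmax
  obtain ⟨u, hu⟩ := A.exists_vecMul_eq_of_dotProduct_eq_zero x⁻¹ fun v hv => by
    rw [dotProduct_comm]
    refine dotProduct_inv_eq_zero_of_isMaxOn_prod hx hmax ?_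
    filter_upwards [eventually_forall_pos_add_smul hx v] with t ht
    exact ⟨fun j => (ht j).le, by rw [mulVec_add, mulVec_smul, hv, smul_zero, add_zero, hxK.2]⟩
  have hxinv : ∀ j, 0 < x⁻¹ j := fun j => inv_pos.2 (hx j)
  refine ⟨x⁻¹, ⟨hxinv, ⟨u, by rw [mulVec_transpose, hu]⟩, by simpa using hxK.2⟩, ?_⟩
  rintro w ⟨hw, ⟨u', rfl⟩, hAw⟩
  rw [mulVec_transpose] at hw hAw ⊢
  rw [← hu] at hxinv ⊢
  refine Matrix.vecMul_eq_of_mulVec_inv_eq hw hxinv ?_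
  rw [hu, inv_inv]
  exact hAw.trans hxK.2.symm

/-- **Existence and uniqueness of the probabilistic barycenter parameters.**
There is a unique vector `w ∈ ℝ^n` with all entries positive, lying in the row span of `A`
(i.e. `w = Aᵀ u` for some `u ∈ ℝ^m`), such that `A (1/w) = b`, i.e. the mean vector
`(1/w_1, …, 1/w_n)` of the product-exponential measure `P_{n,w}` lies in
`K_n = {x ≥ 0 : A x = b}`. -/
theorem exists_unique_barycenter_weights
    (m n : ℕ) (hm : 0 < m) (hmn : m < n)
    (A : Matrix (Fin m) (Fin n) ℝ) (hApos : ∀ i j, 0 < A i j)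
    (hArank : A.rank = m)
    (b : Fin m → ℝ) (hbpos : ∀ i, 0 < b i)
    (hint : ∃ x : Fin n → ℝ, (∀ j, 0 < x j) ∧ A.mulVec x = b) :
    ∃! w : Fin n → ℝ,
      (∀ j, 0 < w j) ∧
      (∃ u : Fin m → ℝ, w = A.transpose.mulVec u) ∧
      A.mulVec (fun j => (w j)⁻¹) = b :=
  exists_unique_barycenter_weights_general m n hm A hApos b hint
end

section
/- Let w be the unique vector with positive entries lying in the row span of A satisfying A(1/w) = b. Then P_{n,w} maximizes differential entropy among all absolutely continuous probability measures on ℝ^n_{≥0} whose mean vector exists and lies in K_n: for every such measure Q with density f such that f·log f is integrable, one has −∫ f(x) log f(x) dx ≤ −∫ p(x) log p(x) dx, where p(x) = (∏_j w_j)·exp(−∑_j w_j x_j)·1_{x≥0} is the density of P_{n,w}. -/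
/-!
Gibbs' inequality gives `∫ f log f ≥ ∫ f log p`. The density `p` is a product of exponential
densities with rates `w j`, so `log p x = ∑ j, log (w j) - w ⬝ᵥ x` on the orthant. Writing
`w = Aᵀ u`, the cross entropy `∫ g log p` of any density `g` on the orthant whose mean `ν`
satisfies `A ν = b` is therefore `∑ j, log (w j) - u ⬝ᵥ b`. This applies both to `g = f` and to
`g = p`, whose mean is `1 / w`, so `∫ f log p = ∫ p log p`.
-/
open MeasureTheory
open Real Set Finset ProbabilityTheory
open scoped Matrix

lemma mul_log_le_mul_log_add_sub {a q : ℝ} (ha : 0 ≤ a) (hq : 0 < q) :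
    a * log q ≤ a * log a + (q - a) := by
  rcases ha.eq_or_lt with rfl | ha
  · simpa using hq.le
  have h := mul_le_mul_of_nonneg_left (log_le_sub_one_of_pos (div_pos hq ha)) ha.le
  rw [log_div hq.ne' ha.ne', mul_sub, mul_sub, mul_div_cancel₀ _ ha.ne'] at h
  linarith

theorem integral_mul_log_le_integral_mul_log {α : Type*} [MeasurableSpace α] {μ : Measure α}
    {f q : α → ℝ} (hf : 0 ≤ f) (hq : 0 ≤ q) (hfq : ∀ x, q x = 0 → f x = 0)
    (hf_int : Integrable f μ) (hq_int : Integrable q μ) (hmass : ∫ x, q x ∂μ ≤ ∫ x, f x ∂μ)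
    (hflogf : Integrable (fun x => f x * log (f x)) μ)
    (hflogq : Integrable (fun x => f x * log (q x)) μ) :
    ∫ x, f x * log (q x) ∂μ ≤ ∫ x, f x * log (f x) ∂μ := by
  have hpt : ∀ x, f x * log (q x) ≤ f x * log (f x) + (q x - f x) := fun x => by
    rcases (hq x).eq_or_lt with h | h
    · simp [hfq x h.symm, ← h]
    · exact mul_log_le_mul_log_add_sub (hf x) h
  have hdiff : Integrable (fun x => q x - f x) μ := hq_int.sub hf_int
  calc ∫ x, f x * log (q x) ∂μ ≤ ∫ x, f x * log (f x) + (q x - f x) ∂μ :=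
        integral_mono hflogq (hflogf.add hdiff) hpt
    _ = ∫ x, f x * log (f x) ∂μ + ((∫ x, q x ∂μ) - ∫ x, f x ∂μ) := by
        rw [integral_add hflogf hdiff, integral_sub hq_int hf_int]
    _ ≤ ∫ x, f x * log (f x) ∂μ := by linarith

lemma exponentialPDFReal_of_nonneg {r t : ℝ} (ht : 0 ≤ t) :
    exponentialPDFReal r t = r * exp (-(r * t)) := by
  simp [exponentialPDFReal, gammaPDFReal, ht]

lemma exponentialPDFReal_of_neg {r t : ℝ} (ht : t < 0) : exponentialPDFReal r t = 0 := by
  simp [exponentialPDFReal, gammaPDFReal, not_le.mpr ht]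

lemma log_exponentialPDFReal {r t : ℝ} (hr : 0 < r) (ht : 0 ≤ t) :
    log (exponentialPDFReal r t) = log r - r * t := by
  rw [exponentialPDFReal_of_nonneg ht, log_mul hr.ne' (exp_pos _).ne', log_exp]; ring

lemma integral_mul_exponentialPDFReal_eq_integral_Ioi (r : ℝ) (φ : ℝ → ℝ) :
    ∫ t, φ t * exponentialPDFReal r t = ∫ t in Ioi 0, φ t * (r * exp (-(r * t))) := by
  rw [← setIntegral_eq_integral_of_forall_compl_eq_zero (s := Ici 0)
    fun t ht => by rw [exponentialPDFReal_of_neg (not_le.mp ht), mul_zero],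
    integral_Ici_eq_integral_Ioi]
  exact setIntegral_congr_fun measurableSet_Ioi fun t ht => by
    rw [exponentialPDFReal_of_nonneg (le_of_lt ht)]

lemma integral_exponentialPDFReal_eq_one {r : ℝ} (hr : 0 < r) :
    ∫ t, exponentialPDFReal r t = 1 := by
  have h := integral_rpow_mul_exp_neg_mul_Ioi one_pos hr
  simp only [sub_self, rpow_zero, one_mul, rpow_one, Gamma_one, mul_one] at h
  simpa [integral_const_mul, h, hr.ne'] using
    integral_mul_exponentialPDFReal_eq_integral_Ioi r (fun _ => 1)

lemma integral_id_mul_exponentialPDFReal {r : ℝ} (hr : 0 < r) :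
    ∫ t, t * exponentialPDFReal r t = r⁻¹ := by
  have h := integral_rpow_mul_exp_neg_mul_Ioi two_pos hr
  rw [Gamma_two, show (2 : ℝ) - 1 = 1 by norm_num] at h
  simp only [rpow_one, rpow_two, mul_one] at h
  rw [integral_mul_exponentialPDFReal_eq_integral_Ioi]
  simp_rw [mul_left_comm _ r, integral_const_mul, h]
  field_simp

theorem integral_coord_mul_fintype_prod {ι : Type*} [Fintype ι] [DecidableEq ι] (g : ι → ℝ → ℝ)
    (k : ι) :
    ∫ x : ι → ℝ, x k * ∏ j, g j (x j) = (∫ t, t * g k t) * ∏ j ∈ univ.erase k, ∫ t, g j t := by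
  have h : ∀ x : ι → ℝ,
      x k * ∏ j, g j (x j) = ∏ j, Function.update g k (fun t => t * g k t) j (x j) := fun x => by
    rw [← mul_prod_erase _ _ (mem_univ k), ← mul_prod_erase _ _ (mem_univ k),
      Function.update_self, mul_assoc]
    congr 2
    exact prod_congr rfl fun j hj => by rw [Function.update_of_ne (ne_of_mem_erase hj)]
  simp_rw [h, integral_fintype_prod_volume_eq_prod, ← mul_prod_erase _ _ (mem_univ k),
    Function.update_self]
  congr 1
  exact prod_congr rfl fun j hj => by rw [Function.update_of_ne (ne_of_mem_erase hj)]

section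
variable {ι : Type*} [Fintype ι] {w : ι → ℝ}

lemma prod_exponentialPDFReal_pos (hw : ∀ j, 0 < w j) {x : ι → ℝ} (hx : ∀ j, 0 ≤ x j) :
    0 < ∏ j, exponentialPDFReal (w j) (x j) :=
  prod_pos fun j _ => by rw [exponentialPDFReal_of_nonneg (hx j)]; exact mul_pos (hw j) (exp_pos _)

lemma prod_exponentialPDFReal_of_not_nonneg {x : ι → ℝ} (hx : ¬ ∀ j, 0 ≤ x j) :
    ∏ j, exponentialPDFReal (w j) (x j) = 0 := by
  push Not at hx
  obtain ⟨j, hj⟩ := hx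
  exact prod_eq_zero (mem_univ j) (exponentialPDFReal_of_neg hj)

lemma orthant_indicator_eq_prod_exponentialPDFReal :
    {x : ι → ℝ | ∀ j, 0 ≤ x j}.indicator (fun x => (∏ j, w j) * exp (-∑ j, w j * x j)) =
      fun x => ∏ j, exponentialPDFReal (w j) (x j) := by
  ext x
  by_cases hx : ∀ j, 0 ≤ x j
  · rw [indicator_of_mem (show x ∈ {x : ι → ℝ | ∀ j, 0 ≤ x j} from hx), ← sum_neg_distrib,
      exp_sum, ← prod_mul_distrib]
    exact prod_congr rfl fun j _ => (exponentialPDFReal_of_nonneg (hx j)).symm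
  · rw [indicator_of_notMem (show x ∉ {x : ι → ℝ | ∀ j, 0 ≤ x j} from hx),
      prod_exponentialPDFReal_of_not_nonneg hx]

lemma integral_prod_exponentialPDFReal (hw : ∀ j, 0 < w j) :
    ∫ x : ι → ℝ, ∏ j, exponentialPDFReal (w j) (x j) = 1 := by
  simp [integral_fintype_prod_volume_eq_prod, integral_exponentialPDFReal_eq_one, hw]

lemma integral_coord_mul_prod_exponentialPDFReal [DecidableEq ι] (hw : ∀ j, 0 < w j) (k : ι) :
    ∫ x : ι → ℝ, x k * ∏ j, exponentialPDFReal (w j) (x j) = (w k)⁻¹ := by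
  simp [integral_coord_mul_fintype_prod, integral_id_mul_exponentialPDFReal, hw,
    integral_exponentialPDFReal_eq_one]

lemma mul_log_prod_exponentialPDFReal (hw : ∀ j, 0 < w j) {g : (ι → ℝ) → ℝ}
    (hg : ∀ x, ¬ (∀ j, 0 ≤ x j) → g x = 0) (x : ι → ℝ) :
    g x * log (∏ j, exponentialPDFReal (w j) (x j)) =
      ∑ j, (log (w j) * g x - w j * (x j * g x)) := by
  by_cases hx : ∀ j, 0 ≤ x j
  · rw [log_prod fun j _ => ?_, mul_sum]
    · exact sum_congr rfl fun j _ => by rw [log_exponentialPDFReal (hw j) (hx j)]; ring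
    · rw [exponentialPDFReal_of_nonneg (hx j)]; exact mul_ne_zero (hw j).ne' (exp_pos _).ne'
  · simp [hg x hx]

lemma integrable_mul_log_prod_exponentialPDFReal (hw : ∀ j, 0 < w j) {g : (ι → ℝ) → ℝ}
    (hg : ∀ x, ¬ (∀ j, 0 ≤ x j) → g x = 0) (hg_int : Integrable g)
    (hmean_int : ∀ j, Integrable fun x : ι → ℝ => x j * g x) :
    Integrable fun x => g x * log (∏ j, exponentialPDFReal (w j) (x j)) := by
  simp_rw [mul_log_prod_exponentialPDFReal hw hg]
  exact integrable_finsetSum _ fun j _ => (hg_int.const_mul _).sub ((hmean_int j).const_mul _)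

lemma integral_mul_log_prod_exponentialPDFReal (hw : ∀ j, 0 < w j) {g : (ι → ℝ) → ℝ}
    (hg : ∀ x, ¬ (∀ j, 0 ≤ x j) → g x = 0) (hg_int : Integrable g) (hg_one : ∫ x, g x = 1)
    (hmean_int : ∀ j, Integrable fun x : ι → ℝ => x j * g x) :
    ∫ x, g x * log (∏ j, exponentialPDFReal (w j) (x j)) =
      ∑ j, log (w j) - w ⬝ᵥ fun j => ∫ x, x j * g x := by
  have hterm (j : ι) : Integrable fun x => log (w j) * g x - w j * (x j * g x) :=
    (hg_int.const_mul _).sub ((hmean_int j).const_mul _)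
  simp_rw [mul_log_prod_exponentialPDFReal hw hg]
  rw [integral_finsetSum _ fun j _ => hterm j, dotProduct, ← sum_sub_distrib]
  refine sum_congr rfl fun j _ => ?_
  rw [integral_sub (hg_int.const_mul _) ((hmean_int j).const_mul _), integral_const_mul,
    integral_const_mul, hg_one, mul_one]

end

theorem maximum_entropy_of_barycenter_general
    (m n : ℕ)
    (A : Matrix (Fin m) (Fin n) ℝ)
    (b : Fin m → ℝ)
    (w : Fin n → ℝ) (hwpos : ∀ j, 0 < w j)
    (hwspan : ∃ u : Fin m → ℝ, w = A.transpose.mulVec u)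
    (hwb : A.mulVec (fun j => (w j)⁻¹) = b)
    (p : (Fin n → ℝ) → ℝ)
    (hp : p = Set.indicator {x : Fin n → ℝ | ∀ j, 0 ≤ x j}
      (fun x => (∏ j, w j) * Real.exp (-∑ j, w j * x j)))
    -- `f` is the density of an absolutely continuous probability measure on `ℝ^n_{≥0}`:
    (f : (Fin n → ℝ) → ℝ)
    (hf0 : ∀ x, 0 ≤ f x)
    (hfsupp : ∀ x : Fin n → ℝ, ¬ (∀ j, 0 ≤ x j) → f x = 0)
    (hfint : Integrable f)
    (hfprob : ∫ x : Fin n → ℝ, f x = 1)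
    -- the mean vector of `f` exists and lies in `K_n`:
    (hmeanint : ∀ j : Fin n, Integrable (fun x : Fin n → ℝ => x j * f x))
    (hmeanK : (∀ j : Fin n, 0 ≤ ∫ x : Fin n → ℝ, x j * f x) ∧
      A.mulVec (fun j => ∫ x : Fin n → ℝ, x j * f x) = b)
    -- `f log f` is integrable:
    (hflog : Integrable (fun x : Fin n → ℝ => f x * Real.log (f x))) :
    -∫ x : Fin n → ℝ, f x * Real.log (f x) ≤ -∫ x : Fin n → ℝ, p x * Real.log (p x) := by
  obtain ⟨u, hu⟩ := hwspan
  rw [orthant_indicator_eq_prod_exponentialPDFReal] at hp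
  subst hp
  have hpair (ν : Fin n → ℝ) (hν : A *ᵥ ν = b) : w ⬝ᵥ ν = u ⬝ᵥ b := by
    rw [hu, Matrix.mulVec_transpose, ← Matrix.dotProduct_mulVec, hν]
  have hp_int : Integrable fun x : Fin n → ℝ => ∏ j, exponentialPDFReal (w j) (x j) :=
    Integrable.of_integral_ne_zero (by simp [integral_prod_exponentialPDFReal hwpos])
  have hp_mean_int (k : Fin n) :
      Integrable fun x : Fin n → ℝ => x k * ∏ j, exponentialPDFReal (w j) (x j) :=
    Integrable.of_integral_ne_zero
      (by simp [integral_coord_mul_prod_exponentialPDFReal hwpos, (hwpos k).ne'])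
  have hgibbs := integral_mul_log_le_integral_mul_log (μ := volume) (f := f) hf0
    (fun x => prod_nonneg fun j _ => exponentialPDFReal_nonneg (hwpos j) (x j))
    (fun x hx => hfsupp x fun h => (prod_exponentialPDFReal_pos hwpos h).ne' hx)
    hfint hp_int (by rw [hfprob, integral_prod_exponentialPDFReal hwpos]) hflog
    (integrable_mul_log_prod_exponentialPDFReal hwpos hfsupp hfint hmeanint)
  rw [integral_mul_log_prod_exponentialPDFReal hwpos hfsupp hfint hfprob hmeanint,
    hpair _ hmeanK.2] at hgibbs
  rw [integral_mul_log_prod_exponentialPDFReal hwpos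
    (fun _ => prod_exponentialPDFReal_of_not_nonneg) hp_int
    (integral_prod_exponentialPDFReal hwpos) hp_mean_int]
  simp only [integral_coord_mul_prod_exponentialPDFReal hwpos, hpair _ hwb]
  linarith

/-- **Maximum entropy property of `P_{n,w}`.**
Let `w` be the unique positive vector in the row span of `A` with `A (1/w) = b`, and let
`p` be the density of `P_{n,w}`, i.e. `p x = (∏ j, w j) exp(-∑ j, w j x j)` on the
nonnegative orthant, `0` elsewhere.  Then for every absolutely continuous probability
measure on `ℝ^n_{≥0}` with density `f` such that `f log f` is integrable and whose mean
vector lies in `K_n = {x ≥ 0 : A x = b}`, the differential entropy of `f` is at most the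
differential entropy of `p`:  `-∫ f log f ≤ -∫ p log p`. -/
theorem maximum_entropy_of_barycenter
    (m n : ℕ) (hm : 0 < m) (hmn : m < n)
    (A : Matrix (Fin m) (Fin n) ℝ) (hApos : ∀ i j, 0 < A i j)
    (hArank : A.rank = m)
    (b : Fin m → ℝ) (hbpos : ∀ i, 0 < b i)
    (hint : ∃ x : Fin n → ℝ, (∀ j, 0 < x j) ∧ A.mulVec x = b)
    (w : Fin n → ℝ) (hwpos : ∀ j, 0 < w j)
    (hwspan : ∃ u : Fin m → ℝ, w = A.transpose.mulVec u)
    (hwb : A.mulVec (fun j => (w j)⁻¹) = b)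
    (p : (Fin n → ℝ) → ℝ)
    (hp : p = Set.indicator {x : Fin n → ℝ | ∀ j, 0 ≤ x j}
      (fun x => (∏ j, w j) * Real.exp (-∑ j, w j * x j)))
    -- `f` is the density of an absolutely continuous probability measure on `ℝ^n_{≥0}`:
    (f : (Fin n → ℝ) → ℝ)
    (hf0 : ∀ x, 0 ≤ f x)
    (hfsupp : ∀ x : Fin n → ℝ, ¬ (∀ j, 0 ≤ x j) → f x = 0)
    (hfint : Integrable f)
    (hfprob : ∫ x : Fin n → ℝ, f x = 1)
    -- the mean vector of `f` exists and lies in `K_n`: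
    (hmeanint : ∀ j : Fin n, Integrable (fun x : Fin n → ℝ => x j * f x))
    (hmeanK : (∀ j : Fin n, 0 ≤ ∫ x : Fin n → ℝ, x j * f x) ∧
      A.mulVec (fun j => ∫ x : Fin n → ℝ, x j * f x) = b)
    -- `f log f` is integrable:
    (hflog : Integrable (fun x : Fin n → ℝ => f x * Real.log (f x))) :
    -∫ x : Fin n → ℝ, f x * Real.log (f x) ≤ -∫ x : Fin n → ℝ, p x * Real.log (p x) :=
  maximum_entropy_of_barycenter_general m n A b w hwpos hwspan hwb p hp f hf0 hfsupp hfint hfprob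
    hmeanint hmeanK hflog
end

section
/- Define H_n(Λ) := −∑_{j=1}^n log((AᵀΛ)_j) + ⟨Λ, b⟩ for Λ ∈ ℝ^m with (AᵀΛ)_j > 0 for all j, and H_n(Λ) := +∞ otherwise. Then H_n is convex and attains its minimum at a unique point Λ₀ ∈ ℝ^m, and the unique positive vector w in the row span of A with A(1/w) = b is given by w = AᵀΛ₀. -/
/-!
Because `w` lies in the row span of `A`, write `w = Aᵀ u`. The identity `A (1/w) = b` turns
`⟨Λ, b⟩` into `∑ j (AᵀΛ)_j / w_j`, so `H = G ∘ Aᵀ` with `G y = ∑ j (y_j / w_j - log y_j)`, a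
separable convex function on the positive orthant. Each summand `t ↦ t / w_j - log t` has its
unique minimum at `t = w_j` (this is `log s ≤ s - 1`, with equality only at `s = 1`), so the
minimizers of `H` are exactly the `Λ` with `AᵀΛ = w`; since `A` has full row rank, `Aᵀ` is
injective and `Λ₀ = u` is the only one.
-/

open Real Finset Matrix

theorem Matrix.mulVec_injective_of_rank_eq_card {K m n : Type*} [Field K] [Fintype n]
    (A : Matrix m n K) (hA : A.rank = Fintype.card n) : Function.Injective A.mulVec := by
  have hker := LinearMap.finrank_range_add_finrank_ker A.mulVecLin
  rw [← rank, hA, Module.finrank_fintype_fun_eq_card, Nat.add_eq_left,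
    Submodule.finrank_eq_zero, LinearMap.ker_eq_bot] at hker
  exact hker

theorem Matrix.neg_sum_log_add_sum_mul_eq {m n : Type*} [Fintype m] [Fintype n]
    (A : Matrix m n ℝ) {w : n → ℝ} {b : m → ℝ} (hwb : A *ᵥ (fun j => (w j)⁻¹) = b)
    (Λ : m → ℝ) :
    -∑ j, log ((Aᵀ *ᵥ Λ) j) + ∑ i, Λ i * b i =
      ∑ j, ((Aᵀ *ᵥ Λ) j / w j - log ((Aᵀ *ᵥ Λ) j)) := by
  have hdual : ∑ i, Λ i * b i = ∑ j, (Aᵀ *ᵥ Λ) j / w j := by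
    simpa [dotProduct, mulVec_transpose, div_eq_mul_inv] using
      (hwb ▸ dotProduct_mulVec Λ A fun j => (w j)⁻¹)
  rw [hdual, sum_sub_distrib]
  ring

theorem one_sub_log_le_div_sub_log {x y : ℝ} (hx : 0 < x) (hy : 0 < y) :
    1 - log y ≤ x / y - log x := by
  have h := log_le_sub_one_of_pos (div_pos hx hy)
  rw [log_div hx.ne' hy.ne'] at h
  linarith

theorem one_sub_log_lt_div_sub_log {x y : ℝ} (hx : 0 < x) (hy : 0 < y) (hxy : x ≠ y) :
    1 - log y < x / y - log x := by
  have h := log_lt_sub_one_of_pos (div_pos hx hy) (mt (div_eq_one_iff_eq hy.ne').mp hxy)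
  rw [log_div hx.ne' hy.ne'] at h
  linarith

theorem convexOn_div_sub_log (c : ℝ) : ConvexOn ℝ (Set.Ioi 0) fun t => t / c - log t :=
  ((LinearMap.convexOn (c⁻¹ • LinearMap.id) (convex_Ioi 0)).sub
    strictConcaveOn_log_Ioi.concaveOn).congr fun t _ => by simp [div_eq_inv_mul]

theorem convexOn_sum {ι E : Type*} [AddCommGroup E] [Module ℝ E] {s : Set E} {t : Finset ι}
    {f : ι → E → ℝ} (hs : Convex ℝ s) (hf : ∀ i ∈ t, ConvexOn ℝ s (f i)) :
    ConvexOn ℝ s fun x => ∑ i ∈ t, f i x := by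
  refine ⟨hs, fun x hx y hy a b ha hb hab => ?_⟩
  simp only [smul_eq_mul, mul_sum, ← sum_add_distrib]
  exact sum_le_sum fun i hi => (hf i hi).2 hx hy ha hb hab

section PositiveOrthant

variable {ι : Type*}

theorem convex_positiveOrthant : Convex ℝ {y : ι → ℝ | ∀ j, 0 < y j} := by
  simpa [Set.pi] using convex_pi (s := Set.univ) fun (_ : ι) _ => convex_Ioi (0 : ℝ)

variable [Fintype ι]

theorem convexOn_sum_div_sub_log (w : ι → ℝ) :
    ConvexOn ℝ {y : ι → ℝ | ∀ j, 0 < y j} fun y => ∑ j, (y j / w j - log (y j)) :=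
  convexOn_sum convex_positiveOrthant fun j _ =>
    ((convexOn_div_sub_log (w j)).comp_linearMap (LinearMap.proj j)).subset
      (fun _ hy => by exact hy j) convex_positiveOrthant

theorem sum_one_sub_log_le_sum_div_sub_log {w y : ι → ℝ} (hw : ∀ j, 0 < w j)
    (hy : ∀ j, 0 < y j) : ∑ j, (1 - log (w j)) ≤ ∑ j, (y j / w j - log (y j)) :=
  sum_le_sum fun j _ => one_sub_log_le_div_sub_log (hy j) (hw j)

theorem eq_of_sum_div_sub_log_le_sum_one_sub_log {w y : ι → ℝ} (hw : ∀ j, 0 < w j)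
    (hy : ∀ j, 0 < y j) (h : ∑ j, (y j / w j - log (y j)) ≤ ∑ j, (1 - log (w j))) : y = w := by
  by_contra hne
  obtain ⟨j, hj⟩ := Function.ne_iff.mp hne
  refine h.not_gt (sum_lt_sum (fun j _ => one_sub_log_le_div_sub_log (hy j) (hw j)) ?_)
  exact ⟨j, mem_univ j, one_sub_log_lt_div_sub_log (hy j) (hw j) hj⟩

end PositiveOrthant

theorem barycenter_weights_eq_argmin_dual_entropy_general
    (m n : ℕ)
    (A : Matrix (Fin m) (Fin n) ℝ)
    (hArank : A.rank = m)
    (b : Fin m → ℝ)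
    (w : Fin n → ℝ) (hwpos : ∀ j, 0 < w j)
    (hwspan : ∃ u : Fin m → ℝ, w = A.transpose.mulVec u)
    (hwb : A.mulVec (fun j => (w j)⁻¹) = b)
    (D : Set (Fin m → ℝ)) (hD : D = {Λ : Fin m → ℝ | ∀ j, 0 < A.transpose.mulVec Λ j})
    (H : (Fin m → ℝ) → ℝ)
    (hH : ∀ Λ, H Λ = -∑ j, Real.log (A.transpose.mulVec Λ j) + ∑ i, Λ i * b i) :
    ConvexOn ℝ D H ∧
    ∃ Λ₀ ∈ D, (∀ Λ ∈ D, H Λ₀ ≤ H Λ) ∧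
      (∀ Λ' ∈ D, (∀ Λ ∈ D, H Λ' ≤ H Λ) → Λ' = Λ₀) ∧
      w = A.transpose.mulVec Λ₀ := by
  obtain ⟨u, hu⟩ := hwspan
  have hHG : H = (fun y => ∑ j, (y j / w j - log (y j))) ∘ Aᵀ.mulVecLin :=
    funext fun Λ => (hH Λ).trans (A.neg_sum_log_add_sum_mul_eq hwb Λ)
  have hDG : D = Aᵀ.mulVecLin ⁻¹' {y | ∀ j, 0 < y j} := hD
  have hinj : Function.Injective Aᵀ.mulVec :=
    Aᵀ.mulVec_injective_of_rank_eq_card (by rw [rank_transpose, hArank, Fintype.card_fin])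
  have hmemD : ∀ Λ ∈ D, ∀ j, 0 < (Aᵀ *ᵥ Λ) j := by rw [hD]; exact fun _ => id
  have huD : u ∈ D := by rw [hD]; exact fun j => hu ▸ hwpos j
  have hHu : H u = ∑ j, (1 - log (w j)) := by
    rw [hHG, Function.comp_apply, mulVecLin_apply, ← hu]
    exact sum_congr rfl fun j _ => by rw [div_self (hwpos j).ne']
  refine ⟨hHG ▸ hDG ▸ (convexOn_sum_div_sub_log w).comp_linearMap _, u, huD, ?_, ?_, hu⟩
  · intro Λ hΛ
    rw [hHu, hHG]
    exact sum_one_sub_log_le_sum_div_sub_log hwpos (hmemD Λ hΛ)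
  · intro Λ' hΛ' hmin
    apply hinj
    rw [← hu]
    have hle := hmin u huD
    rw [hHu, hHG] at hle
    exact eq_of_sum_div_sub_log_le_sum_one_sub_log hwpos (hmemD Λ' hΛ') hle

/-- **Dual variational characterization of the barycenter weights.**
Define `H_n(Λ) = -∑ j, log((AᵀΛ)_j) + ⟨Λ, b⟩` on the (convex) domain
`D = {Λ : (AᵀΛ)_j > 0 for all j}` (outside `D` the function is interpreted as `+∞`).
Then `H_n` is convex on `D`, attains its minimum over `D` at a unique point `Λ₀`, and the
unique positive vector `w` in the row span of `A` with `A (1/w) = b` is `w = AᵀΛ₀`. -/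
theorem barycenter_weights_eq_argmin_dual_entropy
    (m n : ℕ) (hm : 0 < m) (hmn : m < n)
    (A : Matrix (Fin m) (Fin n) ℝ) (hApos : ∀ i j, 0 < A i j)
    (hArank : A.rank = m)
    (b : Fin m → ℝ) (hbpos : ∀ i, 0 < b i)
    (hint : ∃ x : Fin n → ℝ, (∀ j, 0 < x j) ∧ A.mulVec x = b)
    (w : Fin n → ℝ) (hwpos : ∀ j, 0 < w j)
    (hwspan : ∃ u : Fin m → ℝ, w = A.transpose.mulVec u)
    (hwb : A.mulVec (fun j => (w j)⁻¹) = b)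
    (D : Set (Fin m → ℝ)) (hD : D = {Λ : Fin m → ℝ | ∀ j, 0 < A.transpose.mulVec Λ j})
    (H : (Fin m → ℝ) → ℝ)
    (hH : ∀ Λ, H Λ = -∑ j, Real.log (A.transpose.mulVec Λ j) + ∑ i, Λ i * b i) :
    ConvexOn ℝ D H ∧
    ∃ Λ₀ ∈ D, (∀ Λ ∈ D, H Λ₀ ≤ H Λ) ∧
      (∀ Λ' ∈ D, (∀ Λ ∈ D, H Λ' ≤ H Λ) → Λ' = Λ₀) ∧
      w = A.transpose.mulVec Λ₀ :=
  barycenter_weights_eq_argmin_dual_entropy_general m n A hArank b w hwpos hwspan hwb D hD H hH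
end

section
/- Let w be the unique vector with positive entries lying in the row span of A satisfying A(1/w) = b. Then the vector (1/w_1,…,1/w_n) is the unique minimizer over K_n of the function x ↦ −∑_{j=1}^n log(x_j). -/
open Classical in
/-- The function `x ↦ -∑ j, log x_j`, with values in `EReal`, interpreted as `+∞`
whenever some coordinate `x_j` is not strictly positive. -/
noncomputable def negLogSum (n : ℕ) (x : Fin n → ℝ) : EReal :=
  if ∀ j, 0 < x j then ((-∑ j, Real.log (x j) : ℝ) : EReal) else ⊤

/-- **The entropy center minimizes `-∑ log x_j` over `K_n`.**
Let `w` be the unique positive vector in the row span of `A` with `A (1/w) = b`.  Then the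
vector `(1/w_1, …, 1/w_n)` is the unique minimizer over `K_n = {x ≥ 0 : A x = b}` of the
function `x ↦ -∑ j, log x_j` (interpreted as `+∞` when some `x_j ≤ 0`). -/
theorem inv_barycenter_weights_unique_argmin_negLogSum
    (m n : ℕ) (hm : 0 < m) (hmn : m < n)
    (A : Matrix (Fin m) (Fin n) ℝ) (hApos : ∀ i j, 0 < A i j)
    (hArank : A.rank = m)
    (b : Fin m → ℝ) (hbpos : ∀ i, 0 < b i)
    (hint : ∃ x : Fin n → ℝ, (∀ j, 0 < x j) ∧ A.mulVec x = b)
    (w : Fin n → ℝ) (hwpos : ∀ j, 0 < w j)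
    (hwspan : ∃ u : Fin m → ℝ, w = A.transpose.mulVec u)
    (hwb : A.mulVec (fun j => (w j)⁻¹) = b)
    (K : Set (Fin n → ℝ))
    (hK : K = {x : Fin n → ℝ | (∀ j, 0 ≤ x j) ∧ A.mulVec x = b}) :
    (fun j => (w j)⁻¹) ∈ K ∧
    ∀ x ∈ K, x ≠ (fun j => (w j)⁻¹) →
      negLogSum n (fun j => (w j)⁻¹) < negLogSum n x := by
  subst hK
  have hxstar_pos : ∀ j, 0 < (w j)⁻¹ := fun j => inv_pos.2 (hwpos j)
  obtain ⟨u, hu⟩ := hwspan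
  have key : ∀ x : Fin n → ℝ, A.mulVec x = b → ∑ j, w j * x j = ∑ i, u i * b i := by
    intro x hx
    have : dotProduct w x = dotProduct u (A.mulVec x) := by
      rw [Matrix.dotProduct_mulVec, hu, Matrix.mulVec_transpose]
    simpa [dotProduct, hx] using this
  constructor
  · exact ⟨fun j => (hxstar_pos j).le, hwb⟩
  · rintro x ⟨hx0, hxb⟩ hne
    have hsum0 : ∑ j, w j * (x j - (w j)⁻¹) = 0 := by
      have h1 := key x hxb
      have h2 := key (fun j => (w j)⁻¹) hwb
      simp only [mul_sub]
      rw [Finset.sum_sub_distrib, h1, h2, sub_self]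
    by_cases hxpos : ∀ j, 0 < x j
    · have hper : ∀ j, Real.log (x j) ≤ Real.log ((w j)⁻¹) + w j * (x j - (w j)⁻¹) := by
        intro j
        have hq : 0 < x j * w j := mul_pos (hxpos j) (hwpos j)
        have := Real.log_le_sub_one_of_pos hq
        have hlog : Real.log (x j * w j) = Real.log (x j) - Real.log ((w j)⁻¹) := by
          rw [Real.log_mul (hxpos j).ne' (hwpos j).ne', Real.log_inv]; ring
        rw [hlog] at this
        have : Real.log (x j) ≤ Real.log ((w j)⁻¹) + (x j * w j - 1) := by linarith
        have hw1 : w j * (x j - (w j)⁻¹) = x j * w j - 1 := by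
          rw [mul_sub, mul_inv_cancel₀ (hwpos j).ne']; ring
        linarith [hw1 ▸ this]
      obtain ⟨j0, hj0⟩ : ∃ j, x j ≠ (w j)⁻¹ := by
        by_contra h
        push_neg at h
        exact hne (funext h)
      have hstrict : Real.log (x j0) < Real.log ((w j0)⁻¹) + w j0 * (x j0 - (w j0)⁻¹) := by
        have hq : 0 < x j0 * w j0 := mul_pos (hxpos j0) (hwpos j0)
        have hne1 : x j0 * w j0 ≠ 1 := fun h => hj0 (eq_inv_of_mul_eq_one_left h)
        have := Real.log_lt_sub_one_of_pos hq hne1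
        have hlog : Real.log (x j0 * w j0) = Real.log (x j0) - Real.log ((w j0)⁻¹) := by
          rw [Real.log_mul (hxpos j0).ne' (hwpos j0).ne', Real.log_inv]; ring
        rw [hlog] at this
        have hw1 : w j0 * (x j0 - (w j0)⁻¹) = x j0 * w j0 - 1 := by
          rw [mul_sub, mul_inv_cancel₀ (hwpos j0).ne']; ring
        linarith [hw1]
      have hsumlt : ∑ j, Real.log (x j) < ∑ j, (Real.log ((w j)⁻¹) + w j * (x j - (w j)⁻¹)) := by
        exact Finset.sum_lt_sum (fun j _ => hper j) ⟨j0, Finset.mem_univ j0, hstrict⟩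
      rw [Finset.sum_add_distrib, hsum0, add_zero] at hsumlt
      simp only [negLogSum, if_pos hxpos, if_pos hxstar_pos]
      exact_mod_cast EReal.coe_lt_coe_iff.2 (by linarith)
    · simp only [negLogSum, if_pos hxstar_pos, if_neg hxpos]
      exact EReal.coe_lt_top _
end

section
/- Let A be a real m×n matrix and b ∈ ℝ^m such that the set K := {x ∈ ℝ^n : x ≥ 0 and Ax = b} is compact, non-empty, and contains a point with all coordinates strictly positive. Then there exist an m×n real matrix Ā with all entries strictly positive and a vector b̄ ∈ ℝ^m with all entries strictly positive such that K = {x ∈ ℝ^n : x ≥ 0 and Āx = b̄}. -/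
/-!
Compactness of `K` forces `v ≥ 0, A v = 0` to have only the solution `v = 0`, so separating `0`
from the image of the standard simplex under `A` yields `y` with `r := yᵀ A` strictly positive
(Gordan's alternative). The linear form `r` is constant, equal to `ρ := y ⬝ b`, on `K`, and
`ρ > 0` because `K` has a strictly positive point. Adding `t r` to each row of `A` and `t ρ` to
each entry of `b` gives an equivalent system as long as `1 + t ∑ yᵢ ≠ 0` (dotting the new system
with `y` recovers `r ⬝ x = ρ`), and for large `t` all its entries are positive.
-/

open Filter Matrix

variable {m n : Type*} [Fintype n]

theorem ContinuousLinearMap.apply_eq_dotProduct_single [Fintype m] [DecidableEq m]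
    (f : (m → ℝ) →L[ℝ] ℝ) (w : m → ℝ) : f w = (fun i => f (Pi.single i 1)) ⬝ᵥ w := by
  conv_lhs => rw [← Finset.univ_sum_single w]
  simp only [map_sum, dotProduct]
  refine Finset.sum_congr rfl fun i _ => ?_
  rw [mul_comm, ← smul_eq_mul, ← map_smul, ← Pi.single_smul, smul_eq_mul, mul_one]

theorem Matrix.eq_zero_of_nonneg_of_mulVec_eq_zero {A : Matrix m n ℝ} {b : m → ℝ}
    (hbdd : Bornology.IsBounded {x : n → ℝ | 0 ≤ x ∧ A *ᵥ x = b}) {x₀ : n → ℝ}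
    (hx₀ : 0 ≤ x₀ ∧ A *ᵥ x₀ = b) {v : n → ℝ} (hv : 0 ≤ v) (hAv : A *ᵥ v = 0) : v = 0 := by
  obtain ⟨C, hC⟩ := hbdd.exists_norm_le
  have hray : ∀ t : ℝ, 0 ≤ t → ‖t • v‖ ≤ C + ‖x₀‖ := fun t ht => by
    have hmem : 0 ≤ x₀ + t • v ∧ A *ᵥ (x₀ + t • v) = b :=
      ⟨add_nonneg hx₀.1 (smul_nonneg ht hv), by
        rw [mulVec_add, mulVec_smul, hAv, smul_zero, add_zero, hx₀.2]⟩
    calc ‖t • v‖ = ‖(x₀ + t • v) - x₀‖ := by rw [add_sub_cancel_left]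
      _ ≤ ‖x₀ + t • v‖ + ‖x₀‖ := norm_sub_le _ _
      _ ≤ C + ‖x₀‖ := by gcongr; exact hC _ hmem
  by_contra hv0
  have hvpos : 0 < ‖v‖ := norm_pos_iff.mpr hv0
  have hC₀ : 0 ≤ C + ‖x₀‖ := by simpa using hray 0 le_rfl
  have ht : 0 ≤ (C + ‖x₀‖ + 1) / ‖v‖ := by positivity
  have := hray _ ht
  rw [norm_smul, Real.norm_of_nonneg ht, div_mul_cancel₀ _ hvpos.ne'] at this
  linarith

theorem Matrix.exists_forall_pos_vecMul [Fintype m] {A : Matrix m n ℝ}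
    (hA : ∀ v : n → ℝ, 0 ≤ v → A *ᵥ v = 0 → v = 0) : ∃ y : m → ℝ, ∀ j, 0 < (y ᵥ* A) j := by
  classical
  have h0 : (0 : m → ℝ) ∉ A.mulVecLin '' stdSimplex ℝ n := by
    rintro ⟨x, hx, hAx⟩
    have := hx.2
    rw [hA x hx.1 hAx] at this
    simp at this
  obtain ⟨f, u, hf0, hfS⟩ := geometric_hahn_banach_point_closed
    ((convex_stdSimplex ℝ n).linear_image A.mulVecLin)
    ((isCompact_stdSimplex ℝ n).image A.mulVecLin.continuous_of_finiteDimensional).isClosed h0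
  refine ⟨fun i => f (Pi.single i 1), fun j => ?_⟩
  rw [← dotProduct_single_one (_ ᵥ* A) j, ← dotProduct_mulVec, ← f.apply_eq_dotProduct_single]
  exact (map_zero f ▸ hf0).trans (hfS _ ⟨_, single_mem_stdSimplex ℝ j, rfl⟩)

theorem Matrix.mulVec_add_vecMul_eq_iff [Fintype m] (A : Matrix m n ℝ) (b y : m → ℝ) {t : ℝ}
    (ht : 1 + t * ∑ i, y i ≠ 0) (x : n → ℝ) :
    of (fun i j => A i j + t * (y ᵥ* A) j) *ᵥ x = (fun i => b i + t * (y ⬝ᵥ b)) ↔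
      A *ᵥ x = b := by
  have hmul : of (fun i j => A i j + t * (y ᵥ* A) j) *ᵥ x =
      A *ᵥ x + (t * (y ⬝ᵥ A *ᵥ x)) • 1 := by
    ext i
    rw [dotProduct_mulVec]
    simp only [mulVec, dotProduct, of_apply, add_mul, Finset.sum_add_distrib,
      Finset.mul_sum, mul_assoc, Pi.add_apply, Pi.smul_apply, Pi.one_apply, smul_eq_mul, mul_one]
  have hrhs : (fun i => b i + t * (y ⬝ᵥ b)) = b + (t * (y ⬝ᵥ b)) • 1 := by
    ext i; simp
  rw [hmul, hrhs]
  refine ⟨fun h => ?_, fun h => by rw [h]⟩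
  have hq : y ⬝ᵥ A *ᵥ x = y ⬝ᵥ b := by
    have := congrArg (y ⬝ᵥ ·) h
    simp only [dotProduct_add, dotProduct_smul, dotProduct_one, smul_eq_mul] at this
    exact mul_right_cancel₀ ht (by linear_combination this)
  rw [hq] at h
  exact add_right_cancel h

theorem eventually_pos_add_mul (c : ℝ) {d : ℝ} (hd : 0 < d) : ∀ᶠ t in atTop, 0 < c + t * d :=
  (tendsto_atTop_add_const_left _ c (tendsto_id.atTop_mul_const hd)).eventually_gt_atTop 0

theorem eventually_one_add_mul_ne_zero (s : ℝ) : ∀ᶠ t in atTop, 1 + t * s ≠ 0 := by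
  rcases eq_or_ne s 0 with rfl | hs
  · simp
  · filter_upwards [eventually_ne_atTop (-1 / s)] with t ht
    contrapose! ht
    field_simp
    linarith

theorem exists_positive_representation_general
    (m n : ℕ) (hn : 0 < n)
    (A : Matrix (Fin m) (Fin n) ℝ) (b : Fin m → ℝ)
    (K : Set (Fin n → ℝ))
    (hK : K = {x : Fin n → ℝ | (∀ j, 0 ≤ x j) ∧ A.mulVec x = b})
    (hcompact : IsCompact K)
    (hint : ∃ x ∈ K, ∀ j, 0 < x j) :
    ∃ (Abar : Matrix (Fin m) (Fin n) ℝ) (bbar : Fin m → ℝ),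
      (∀ i j, 0 < Abar i j) ∧ (∀ i, 0 < bbar i) ∧
      K = {x : Fin n → ℝ | (∀ j, 0 ≤ x j) ∧ Abar.mulVec x = bbar} := by
  subst hK
  obtain ⟨x₀, hx₀, hx₀pos⟩ := hint
  obtain ⟨y, hy⟩ := exists_forall_pos_vecMul fun v hv hAv =>
    eq_zero_of_nonneg_of_mulVec_eq_zero hcompact.isBounded hx₀ hv hAv
  have hρ : 0 < y ⬝ᵥ b := by
    have : Nonempty (Fin n) := ⟨⟨0, hn⟩⟩
    rw [← hx₀.2, dotProduct_mulVec]
    exact Finset.sum_pos (fun j _ => mul_pos (hy j) (hx₀pos j)) Finset.univ_nonempty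
  obtain ⟨t, hAt, hbt, ht⟩ : ∃ t : ℝ, (∀ i j, 0 < A i j + t * (y ᵥ* A) j) ∧
      (∀ i, 0 < b i + t * (y ⬝ᵥ b)) ∧ 1 + t * ∑ i, y i ≠ 0 :=
    ((eventually_all.2 fun i => eventually_all.2 fun j => eventually_pos_add_mul (A i j) (hy j)).and
      ((eventually_all.2 fun i => eventually_pos_add_mul (b i) hρ).and
        (eventually_one_add_mul_ne_zero _))).exists
  refine ⟨of fun i j => A i j + t * (y ᵥ* A) j, fun i => b i + t * (y ⬝ᵥ b), hAt, hbt, ?_⟩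
  ext x
  exact and_congr_right' (mulVec_add_vecMul_eq_iff A b y ht x).symm

/-- **Positive representation of a compact polytope.**
If `K = {x ≥ 0 : A x = b}` is compact, non-empty, and contains a point with all
coordinates strictly positive, then it admits a representation `K = {x ≥ 0 : Ā x = b̄}`
in which all entries of the matrix `Ā` and of the vector `b̄` are strictly positive. -/
theorem exists_positive_representation
    (m n : ℕ) (hm : 0 < m) (hn : 0 < n)
    (A : Matrix (Fin m) (Fin n) ℝ) (b : Fin m → ℝ)
    (K : Set (Fin n → ℝ))
    (hK : K = {x : Fin n → ℝ | (∀ j, 0 ≤ x j) ∧ A.mulVec x = b})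
    (hcompact : IsCompact K)
    (hne : K.Nonempty)
    (hint : ∃ x ∈ K, ∀ j, 0 < x j) :
    ∃ (Abar : Matrix (Fin m) (Fin n) ℝ) (bbar : Fin m → ℝ),
      (∀ i j, 0 < Abar i j) ∧ (∀ i, 0 < bbar i) ∧
      K = {x : Fin n → ℝ | (∀ j, 0 ≤ x j) ∧ Abar.mulVec x = bbar} :=
  exists_positive_representation_general m n hn A b K hK hcompact hint
end

section
/- If ‖Â^{(n)}‖_max → 0 as n → ∞, then Property A holds: for each K ∈ ℕ there exist a constant C > 0 independent of n and an n₀ such that for all n ≥ n₀ there are pairwise disjoint non-empty subsets I_1,…,I_K ⊆ {1,…,n} with det(Â_{I_l} (Â_{I_l})ᵀ) ≥ C for every l = 1,…,K. -/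
/-!
Since `Â Âᵀ = 1`, the rank-one matrices `âⱼ âⱼᵀ` built from the columns of `Â` sum to the
identity. Viewed as vectors in the Frobenius space `ℝ^{m×m}`, they are distributed greedily
among `K` buckets, each new one going to the bucket whose current sum has the smallest inner
product with it. This keeps `∑ₗ ‖Mₗ - (∑ M)/K‖²` below `∑ⱼ ‖âⱼ âⱼᵀ‖² = ∑ⱼ |âⱼ|⁴`, which is at
most `m² ‖Â‖²_max`. Hence every bucket sum `Mₗ = Â_{Iₗ} Â_{Iₗ}ᵀ` is Frobenius-close to `K⁻¹ • 1`,
so its quadratic form is at least `|x|²/(2K)` once `‖Â‖_max ≤ 1/(2Km)`, and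
`det Mₗ ≥ (2K)^{-m}`.
-/

open Finset Matrix RealInnerProductSpace

section Balancing

variable {E : Type*} [NormedAddCommGroup E] [InnerProductSpace ℝ E] {K : ℕ}

noncomputable def spread (M : Fin K → E) : ℝ :=
  ∑ l, ‖M l‖ ^ 2 - (K : ℝ)⁻¹ * ‖∑ l, M l‖ ^ 2

lemma sum_norm_sub_mean_sq (M : Fin K → E) :
    ∑ l, ‖M l - (K : ℝ)⁻¹ • ∑ l', M l'‖ ^ 2 = spread M := by
  have hK : (K : ℝ) * (K : ℝ)⁻¹ ^ 2 = (K : ℝ)⁻¹ := by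
    rcases eq_or_ne (K : ℝ) 0 with h | h
    · simp [h]
    · field_simp
  have hcross : ∑ l, ⟪M l, (K : ℝ)⁻¹ • ∑ l', M l'⟫ = (K : ℝ)⁻¹ * ‖∑ l, M l‖ ^ 2 := by
    rw [← sum_inner, real_inner_smul_right, real_inner_self_eq_norm_sq]
  simp only [norm_sub_sq_real, sum_add_distrib, sum_sub_distrib, ← mul_sum, hcross, norm_smul,
    sum_const, card_univ, Fintype.card_fin, nsmul_eq_mul, spread, Real.norm_eq_abs, mul_pow,
    sq_abs]
  linear_combination ‖∑ l, M l‖ ^ 2 * hK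

lemma spread_add_single_le {M : Fin K → E} {v : E} {l₀ : Fin K}
    (hl₀ : ∀ l, ⟪M l₀, v⟫ ≤ ⟪M l, v⟫) :
    spread (M + Pi.single l₀ v) ≤ spread M + ‖v‖ ^ 2 := by
  have hKpos : (0 : ℝ) < K := by exact_mod_cast l₀.pos
  have hsq : ∑ l, ‖(M + Pi.single l₀ v : Fin K → E) l‖ ^ 2
      = ∑ l, ‖M l‖ ^ 2 + (2 * ⟪M l₀, v⟫ + ‖v‖ ^ 2) := by
    rw [← sub_eq_iff_eq_add', ← sum_sub_distrib, sum_eq_single l₀]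
    · simp [norm_add_sq_real]; ring
    · intro l _ hl; simp [hl]
    · simp
  have hsum : ∑ l, (M + Pi.single l₀ v : Fin K → E) l = ∑ l, M l + v := by
    simp [sum_add_distrib]
  have hmin : (K : ℝ) * ⟪M l₀, v⟫ ≤ ⟪∑ l, M l, v⟫ := by
    simpa [sum_inner] using card_nsmul_le_sum univ (fun l => ⟪M l, v⟫) _ fun l _ => hl₀ l
  have hmin' : ⟪M l₀, v⟫ ≤ (K : ℝ)⁻¹ * ⟪∑ l, M l, v⟫ := by
    rwa [le_inv_mul_iff₀ hKpos]
  simp only [spread, hsq, hsum, norm_add_sq_real]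
  nlinarith [mul_nonneg (inv_nonneg.mpr hKpos.le) (sq_nonneg ‖v‖)]

lemma exists_spread_sum_single_le {ι : Type*} [DecidableEq ι] (hK : 0 < K) (v : ι → E)
    (s : Finset ι) :
    ∃ f : ι → Fin K,
      spread (∑ j ∈ s, (Pi.single (f j) (v j) : Fin K → E)) ≤ ∑ j ∈ s, ‖v j‖ ^ 2 := by
  induction s using Finset.induction_on with
  | empty => exact ⟨fun _ => ⟨0, hK⟩, by simp [spread]⟩
  | insert a s ha ih =>
    obtain ⟨f, hf⟩ := ih
    set M := ∑ j ∈ s, (Pi.single (f j) (v j) : Fin K → E)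
    obtain ⟨l₀, -, hl₀⟩ := exists_min_image univ (fun l => ⟪M l, v a⟫) ⟨⟨0, hK⟩, mem_univ _⟩
    refine ⟨Function.update f a l₀, ?_⟩
    have hM : ∑ j ∈ insert a s, (Pi.single (Function.update f a l₀ j) (v j) : Fin K → E)
        = M + Pi.single l₀ (v a) := by
      rw [sum_insert ha, Function.update_self, add_comm]
      congr 1
      refine sum_congr rfl fun j hj => ?_
      rw [Function.update_of_ne (ne_of_mem_of_not_mem hj ha)]
    rw [hM, sum_insert ha]
    linarith [spread_add_single_le (fun l => hl₀ l (mem_univ l))]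

theorem exists_norm_sum_sub_mean_sq_le {ι : Type*} [DecidableEq ι] (hK : 0 < K) (v : ι → E)
    (s : Finset ι) : ∃ f : ι → Fin K, ∀ l,
      ‖∑ j ∈ s with f j = l, v j - (K : ℝ)⁻¹ • ∑ j ∈ s, v j‖ ^ 2 ≤ ∑ j ∈ s, ‖v j‖ ^ 2 := by
  obtain ⟨f, hf⟩ := exists_spread_sum_single_le hK v s
  refine ⟨f, fun l => ?_⟩
  set M := ∑ j ∈ s, (Pi.single (f j) (v j) : Fin K → E)
  have hMl : ∀ l, M l = ∑ j ∈ s with f j = l, v j := by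
    intro l
    simp only [M, Finset.sum_apply, Pi.single_apply, sum_filter, eq_comm]
  have hMsum : ∑ l, M l = ∑ j ∈ s, v j := by
    simp only [M, Finset.sum_apply]
    rw [sum_comm]
    simp
  rw [← hMl, ← hMsum]
  calc _ ≤ ∑ l', ‖M l' - (K : ℝ)⁻¹ • ∑ l'', M l''‖ ^ 2 :=
        single_le_sum (f := fun l' => ‖M l' - (K : ℝ)⁻¹ • ∑ l'', M l''‖ ^ 2)
          (fun _ _ => sq_nonneg _) (mem_univ l)
    _ = spread M := sum_norm_sub_mean_sq M
    _ ≤ _ := hf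

end Balancing

section Gram

variable {ρ ι : Type*} [Fintype ρ]

lemma dotProduct_self_nonneg (x : ρ → ℝ) : 0 ≤ x ⬝ᵥ x :=
  Fintype.sum_nonneg fun i => mul_self_nonneg (x i)

noncomputable def selfOuter (u : ρ → ℝ) : EuclideanSpace ℝ (ρ × ρ) :=
  WithLp.toLp 2 fun p => u p.1 * u p.2

lemma inner_selfOuter (u x : ρ → ℝ) : ⟪selfOuter u, selfOuter x⟫ = (u ⬝ᵥ x) ^ 2 := by
  simp only [selfOuter, EuclideanSpace.inner_toLp_toLp, dotProduct, Fintype.sum_prod_type, sq,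
    sum_mul_sum, star_trivial]
  exact sum_congr rfl fun i _ => sum_congr rfl fun k _ => by ring

lemma norm_selfOuter (x : ρ → ℝ) : ‖selfOuter x‖ = x ⬝ᵥ x := by
  rw [norm_eq_sqrt_real_inner, inner_selfOuter, Real.sqrt_sq (dotProduct_self_nonneg x)]

lemma dotProduct_mul_transpose_mulVec (B : Matrix ρ ι ℝ) [Fintype ι] (x : ρ → ℝ) :
    x ⬝ᵥ (B * Bᵀ) *ᵥ x = ∑ j, (x ᵥ* B) j ^ 2 := by
  rw [← mulVec_mulVec, dotProduct_mulVec, ← vecMul_transpose, transpose_transpose]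
  simp [dotProduct, sq]

lemma dotProduct_gram_submatrix_mulVec (a : Matrix ρ ι ℝ) (I : Finset ι) (x : ρ → ℝ) :
    x ⬝ᵥ (a.submatrix id ((↑) : I → ι) * (a.submatrix id ((↑) : I → ι))ᵀ) *ᵥ x
      = ∑ j ∈ I, (x ᵥ* a) j ^ 2 := by
  rw [dotProduct_mul_transpose_mulVec, ← sum_coe_sort I]
  rfl

end Gram

lemma det_ge_pow_of_le_dotProduct_mulVec {n : Type*} [Fintype n] [DecidableEq n]
    {M : Matrix n n ℝ} (hM : M.IsHermitian) {c : ℝ} (hc : 0 ≤ c)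
    (hq : ∀ x, c * (x ⬝ᵥ x) ≤ x ⬝ᵥ M *ᵥ x) : c ^ Fintype.card n ≤ M.det := by
  have hev : ∀ i, c ≤ hM.eigenvalues i := by
    intro i
    have hv : ∀ v : EuclideanSpace ℝ n, ‖v‖ = 1 → WithLp.ofLp v ⬝ᵥ WithLp.ofLp v = 1 := by
      intro v hv
      rw [← one_pow 2, ← hv, ← real_inner_self_eq_norm_sq]
      rfl
    simpa [hM.eigenvalues_eq i, hv _ (hM.eigenvectorBasis.orthonormal.1 i)]
      using hq (hM.eigenvectorBasis i)
  rw [hM.det_eq_prod_eigenvalues, ← card_univ, ← prod_const]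
  exact prod_le_prod (fun _ _ => hc) fun i _ => hev i

lemma Matrix.PosDef.inv_mul_mul_transpose_inv_mul_eq_one {n ι : Type*} [Fintype n]
    [DecidableEq n] [Fintype ι] {S : Matrix n n ℝ} (hS : S.PosDef) {T : Matrix n ι ℝ}
    (h : S * S = T * Tᵀ) :
    S⁻¹ * T * (S⁻¹ * T)ᵀ = 1 := by
  have hdet : IsUnit S.det := hS.isUnit.map detMonoidHom
  have hsymm : Sᵀ = S := isHermitian_iff_isSymm.mp hS.isHermitian
  rw [transpose_mul, transpose_nonsing_inv, hsymm, Matrix.mul_assoc, ← Matrix.mul_assoc T,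
    ← h, Matrix.mul_assoc, mul_nonsing_inv _ hdet, Matrix.mul_one, nonsing_inv_mul _ hdet]

section Partition

variable {ρ ι : Type*} [Fintype ρ] [DecidableEq ρ] [Fintype ι]

lemma sum_norm_selfOuter_sq_le (a : Matrix ρ ι ℝ) (ha : a * aᵀ = 1) {ε : ℝ}
    (hε : ∀ i j, |a i j| ≤ ε) :
    ∑ j, ‖selfOuter (fun i => a i j)‖ ^ 2 ≤ (Fintype.card ρ * ε) ^ 2 := by
  have hcol : ∀ j, (fun i => a i j) ⬝ᵥ (fun i => a i j) ≤ Fintype.card ρ * ε ^ 2 := fun j => by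
    simpa [dotProduct, ← sq] using
      sum_le_sum fun i (_ : i ∈ univ) => sq_le_sq' (abs_le.mp (hε i j)).1 (abs_le.mp (hε i j)).2
  have htrace : ∑ j, (fun i => a i j) ⬝ᵥ (fun i => a i j) = Fintype.card ρ := by
    rw [← trace_one (n := ρ) (R := ℝ), ← ha, trace]
    simp only [dotProduct]
    exact sum_comm
  calc ∑ j, ‖selfOuter (fun i => a i j)‖ ^ 2
      ≤ ∑ j, Fintype.card ρ * ε ^ 2 * ((fun i => a i j) ⬝ᵥ (fun i => a i j)) := by
        refine sum_le_sum fun j _ => ?_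
        rw [norm_selfOuter, sq]
        exact mul_le_mul_of_nonneg_right (hcol j) (dotProduct_self_nonneg _)
    _ = (Fintype.card ρ * ε) ^ 2 := by rw [← mul_sum, htrace]; ring

theorem exists_partition_le_sum_sq_vecMul [DecidableEq ι] (a : Matrix ρ ι ℝ) (ha : a * aᵀ = 1) {K : ℕ}
    (hK : 0 < K) {ε : ℝ} (hε₀ : 0 ≤ ε) (hε : ∀ i j, |a i j| ≤ ε)
    (hεK : Fintype.card ρ * ε ≤ (2 * K : ℝ)⁻¹) :
    ∃ f : ι → Fin K, ∀ l x, (2 * K : ℝ)⁻¹ * (x ⬝ᵥ x) ≤ ∑ j with f j = l, (x ᵥ* a) j ^ 2 := by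
  set v : ι → EuclideanSpace ℝ (ρ × ρ) := fun j => selfOuter (fun i => a i j)
  obtain ⟨f, hf⟩ := exists_norm_sum_sub_mean_sq_le hK v univ
  refine ⟨f, fun l x => ?_⟩
  have hinner : ∀ s : Finset ι, ⟪∑ j ∈ s, v j, selfOuter x⟫ = ∑ j ∈ s, (x ᵥ* a) j ^ 2 := by
    intro s
    simp only [v, sum_inner, inner_selfOuter, dotProduct_comm _ x]
    rfl
  set D := ∑ j with f j = l, v j - (K : ℝ)⁻¹ • ∑ j, v j
  have hD : ‖D‖ ≤ (2 * K : ℝ)⁻¹ := by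
    refine le_trans ?_ hεK
    exact (sq_le_sq₀ (norm_nonneg _) (by positivity)).mp
      ((hf l).trans (sum_norm_selfOuter_sq_le a ha hε))
  have hDx : -(‖D‖ * (x ⬝ᵥ x)) ≤ ⟪D, selfOuter x⟫ := by
    rw [← norm_selfOuter]
    exact neg_le_of_abs_le (abs_real_inner_le_norm _ _)
  have hv : ⟪∑ j, v j, selfOuter x⟫ = x ⬝ᵥ x := by
    rw [hinner, ← dotProduct_mul_transpose_mulVec, ha, one_mulVec]
  have hsplit : ∑ j with f j = l, (x ᵥ* a) j ^ 2 = ⟪D, selfOuter x⟫ + (K : ℝ)⁻¹ * (x ⬝ᵥ x) := by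
    rw [← hinner, ← hv, ← real_inner_smul_left, ← inner_add_left, sub_add_cancel]
  have hhalf : (2 * K : ℝ)⁻¹ * (x ⬝ᵥ x) = (K : ℝ)⁻¹ * (x ⬝ᵥ x) - (2 * K : ℝ)⁻¹ * (x ⬝ᵥ x) := by
    ring
  rw [hsplit]
  linarith [mul_le_mul_of_nonneg_right hD (dotProduct_self_nonneg x)]

theorem exists_disjoint_det_gram_submatrix_ge [DecidableEq ι] [Nonempty ρ] (a : Matrix ρ ι ℝ)
    (ha : a * aᵀ = 1) {K : ℕ} (hK : 0 < K) {ε : ℝ} (hε₀ : 0 ≤ ε) (hε : ∀ i j, |a i j| ≤ ε)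
    (hεK : Fintype.card ρ * ε ≤ (2 * K : ℝ)⁻¹) :
    ∃ I : Fin K → Finset ι, (∀ l, (I l).Nonempty) ∧ (∀ l l', l ≠ l' → Disjoint (I l) (I l')) ∧
      ∀ l, (2 * K : ℝ)⁻¹ ^ Fintype.card ρ ≤
        (a.submatrix id ((↑) : I l → ι) * (a.submatrix id ((↑) : I l → ι))ᵀ).det := by
  obtain ⟨f, hf⟩ := exists_partition_le_sum_sq_vecMul a ha hK hε₀ hε hεK
  have hc : (0 : ℝ) < (2 * K : ℝ)⁻¹ := by positivity
  refine ⟨fun l => {j | f j = l}, fun l => ?_, fun l l' hl => ?_, fun l => ?_⟩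
  · obtain ⟨i⟩ := ‹Nonempty ρ›
    refine nonempty_of_sum_ne_zero (f := fun j => (Pi.single i 1 ᵥ* a) j ^ 2) (ne_of_gt ?_)
    have h := hf l (Pi.single i 1)
    simp only [single_dotProduct, Pi.single_eq_same, mul_one] at h
    exact hc.trans_le h
  · exact disjoint_filter.mpr fun j _ hj => hj ▸ hl
  · refine det_ge_pow_of_le_dotProduct_mulVec ?_ hc.le fun x => ?_
    · rw [IsHermitian, conjTranspose_eq_transpose_of_trivial, transpose_mul, transpose_transpose]
    · rw [dotProduct_gram_submatrix_mulVec]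
      exact hf l x

end Partition

theorem propertyA_of_Ahat_max_tendsto_zero_general
    (m : ℕ) (hm : 0 < m)
    -- `Ã_{ij} = A_{ij}/w_j`, `S = (ÃÃᵀ)^{1/2}`, `Â = S⁻¹Ã`:
    (Atil : ∀ n : ℕ, Matrix (Fin m) (Fin n) ℝ)
    (S : ∀ n : ℕ, Matrix (Fin m) (Fin m) ℝ)
    (hS : ∀ n, m < n → (S n).PosDef ∧ S n * S n = Atil n * (Atil n).transpose)
    (Ahat : ∀ n : ℕ, Matrix (Fin m) (Fin n) ℝ)
    (hAhat : ∀ n, Ahat n = (S n)⁻¹ * Atil n)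
    -- `‖Â‖_max → 0`:
    (hAmax : ∀ ε > (0 : ℝ), ∃ N, ∀ n ≥ N, ∀ i j, |Ahat n i j| < ε) :
    ∀ K : ℕ, 0 < K → ∃ C > (0 : ℝ), ∃ n₀ : ℕ, ∀ n ≥ n₀,
      ∃ I : Fin K → Finset (Fin n),
        (∀ l, (I l).Nonempty) ∧
        (∀ l l', l ≠ l' → Disjoint (I l) (I l')) ∧
        (∀ l, C ≤ (((Ahat n).submatrix id (fun j : (I l : Finset (Fin n)) => (j : Fin n))) *
          ((Ahat n).submatrix id (fun j : (I l : Finset (Fin n)) => (j : Fin n))).transpose).det) := by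
  intro K hK
  have : Nonempty (Fin m) := ⟨⟨0, hm⟩⟩
  obtain ⟨N, hN⟩ := hAmax (2 * K * m : ℝ)⁻¹ (by positivity)
  refine ⟨(2 * K : ℝ)⁻¹ ^ m, by positivity, max N (m + 1), fun n hn => ?_⟩
  obtain ⟨hSpos, hSsq⟩ := hS n (by omega)
  have horth : Ahat n * (Ahat n)ᵀ = 1 := by
    rw [hAhat]
    exact hSpos.inv_mul_mul_transpose_inv_mul_eq_one hSsq
  have hεK : (Fintype.card (Fin m) : ℝ) * (2 * K * m : ℝ)⁻¹ = (2 * K : ℝ)⁻¹ := by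
    rw [Fintype.card_fin]
    field_simp
  obtain ⟨I, hne, hdisj, hdet⟩ := exists_disjoint_det_gram_submatrix_ge (Ahat n) horth hK
    (by positivity) (fun i j => (hN n (le_of_max_le_left hn) i j).le) hεK.le
  exact ⟨I, hne, hdisj, by simpa only [Fintype.card_fin] using hdet⟩

/-- **`‖Â‖_max → 0` implies Property A.**
If the maximal entry of `Â = (ÃÃᵀ)^{-1/2}Ã` tends to `0`, then for each `K ∈ ℕ` there
exist a constant `C > 0` (independent of `n`) and an `n₀` such that for all `n ≥ n₀` one
can find pairwise disjoint non-empty subsets `I₁, …, I_K ⊆ {1, …, n}` with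
`det(Â_{I_l} (Â_{I_l})ᵀ) ≥ C` for every `l`. -/
theorem propertyA_of_Ahat_max_tendsto_zero
    (m : ℕ) (hm : 0 < m)
    (A : ∀ n : ℕ, Matrix (Fin m) (Fin n) ℝ)
    (b : ∀ n : ℕ, Fin m → ℝ)
    (hApos : ∀ n, ∀ i j, 0 < A n i j)
    (hbpos : ∀ n, ∀ i, 0 < b n i)
    (hArank : ∀ n, m < n → (A n).rank = m)
    (hint : ∀ n, m < n → ∃ x : Fin n → ℝ, (∀ j, 0 < x j) ∧ (A n).mulVec x = b n)
    -- the barycenter weights `w`: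
    (w : ∀ n : ℕ, Fin n → ℝ)
    (hw : ∀ n, m < n → (∀ j, 0 < w n j) ∧
      (∃ u : Fin m → ℝ, w n = (A n).transpose.mulVec u) ∧
      (A n).mulVec (fun j => (w n j)⁻¹) = b n)
    -- `Ã_{ij} = A_{ij}/w_j`, `S = (ÃÃᵀ)^{1/2}`, `Â = S⁻¹Ã`:
    (Atil : ∀ n : ℕ, Matrix (Fin m) (Fin n) ℝ)
    (hAtil : ∀ n i j, Atil n i j = A n i j / w n j)
    (S : ∀ n : ℕ, Matrix (Fin m) (Fin m) ℝ)
    (hS : ∀ n, m < n → (S n).PosDef ∧ S n * S n = Atil n * (Atil n).transpose)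
    (Ahat : ∀ n : ℕ, Matrix (Fin m) (Fin n) ℝ)
    (hAhat : ∀ n, Ahat n = (S n)⁻¹ * Atil n)
    -- `‖Â‖_max → 0`:
    (hAmax : ∀ ε > (0 : ℝ), ∃ N, ∀ n ≥ N, ∀ i j, |Ahat n i j| < ε) :
    ∀ K : ℕ, 0 < K → ∃ C > (0 : ℝ), ∃ n₀ : ℕ, ∀ n ≥ n₀,
      ∃ I : Fin K → Finset (Fin n),
        (∀ l, (I l).Nonempty) ∧
        (∀ l l', l ≠ l' → Disjoint (I l) (I l')) ∧
        (∀ l, C ≤ (((Ahat n).submatrix id (fun j : (I l : Finset (Fin n)) => (j : Fin n))) *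
          ((Ahat n).submatrix id (fun j : (I l : Finset (Fin n)) => (j : Fin n))).transpose).det) :=
  propertyA_of_Ahat_max_tendsto_zero_general m hm Atil S hS Ahat hAhat hAmax
end

section
/- Let K ∈ ℕ and suppose that for every n, every column of A^{(n)} appears at least K times among the columns of A^{(n)}. Then Property A holds for this K: there exist a constant C > 0 independent of n such that for all n there are pairwise disjoint non-empty subsets I_1,…,I_K ⊆ {1,…,n} with det(Â_{I_l} (Â_{I_l})ᵀ) ≥ C for every l = 1,…,K. -/
/-!
`Â` has orthonormal rows, so `∑ⱼ ⟪x, Âⱼ⟫² = ‖x‖²` for every `x`. Since `w` lies in the row span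
of `A`, the column `Âⱼ` depends only on the column `Aⱼ`, so `Â` inherits the repetitions of `A`.
Split each class of equal columns (of size `≥ K`) into `K` parts according to the rank of an
index inside its class modulo `K`; every part receives at least a `1/(2K)` share of each class.
Hence `Â_{I_l} Â_{I_l}ᵀ ≥ (2K)⁻¹ I` in the Loewner order, and its determinant is at least
`(2K)^{-m}`.
-/

open Finset Matrix

namespace Finset

variable {α : Type*} [LinearOrder α]

lemma strictMonoOn_card_filter_lt (T : Finset α) :
    StrictMonoOn (fun j => #{x ∈ T | x < j}) T := by
  intro a ha b hb hab
  refine card_lt_card ((ssubset_iff_of_subset ?_).2 ⟨a, ?_, ?_⟩)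
  · exact monotone_filter_right _ fun x _ hx => hx.trans hab
  · simp [mem_coe.1 ha, hab]
  · simp

lemma image_card_filter_lt_eq_range (T : Finset α) :
    T.image (fun j => #{x ∈ T | x < j}) = range #T := by
  refine eq_of_subset_of_card_le (fun t ht => ?_) ?_
  · obtain ⟨j, hj, rfl⟩ := mem_image.1 ht
    exact mem_range.2 (card_lt_card (filter_ssubset.2 ⟨j, hj, lt_irrefl j⟩))
  · rw [card_range, card_image_of_injOn T.strictMonoOn_card_filter_lt.injOn]

lemma le_two_mul_card_filter_card_filter_lt_mod (T : Finset α) {K l : ℕ} (hKT : K ≤ #T)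
    (hl : l < K) : #T ≤ 2 * K * #{j ∈ T | #{x ∈ T | x < j} % K = l} := by
  have hK : 0 < K := by omega
  have hcard : #{j ∈ T | #{x ∈ T | x < j} % K = l} = #{t ∈ range #T | t % K = l} := by
    rw [← T.image_card_filter_lt_eq_range, filter_image,
      card_image_of_injOn (T.strictMonoOn_card_filter_lt.injOn.mono (filter_subset _ _))]
  have hcount : #T / K ≤ #{t ∈ range #T | t % K = l} := by
    have h := Nat.count_modEq_card (b := #T) hK l
    rw [Nat.count_eq_card_filter_range] at h
    simp only [Nat.ModEq, Nat.mod_eq_of_lt hl] at h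
    omega
  -- `#T = K * (#T / K) + #T % K` with `#T % K < K ≤ K * (#T / K)`
  have hq : 1 ≤ #T / K := (Nat.one_le_div_iff hK).2 hKT
  have hdiv := Nat.div_add_mod #T K
  have hmod := Nat.mod_lt #T hK
  rw [hcard]
  nlinarith

end Finset

section FiberRank

variable {ι β : Type*} [Fintype ι] [LinearOrder ι] [DecidableEq β]

def fiberRank (f : ι → β) (j : ι) : ℕ := #{x | f x = f j ∧ x < j}

def fiberRankClass (f : ι → β) (K l : ℕ) : Finset ι := {j | fiberRank f j % K = l}

lemma filter_fiberRankClass_eq (f : ι → β) (K l : ℕ) (b : β) :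
    ({j ∈ fiberRankClass f K l | f j = b} : Finset ι) =
      {j ∈ ({x | f x = b} : Finset ι) | #{x ∈ ({x | f x = b} : Finset ι) | x < j} % K = l} := by
  unfold fiberRankClass fiberRank
  ext j
  simp only [mem_filter, mem_univ, true_and, filter_filter]
  constructor
  · rintro ⟨hj, rfl⟩; exact ⟨rfl, hj⟩
  · rintro ⟨rfl, hj⟩; exact ⟨hj, rfl⟩

lemma fiberRankClass_nonempty [Nonempty ι] {f : ι → β} {K l : ℕ}
    (hK : ∀ j, K ≤ #{x | f x = f j}) (hl : l < K) : (fiberRankClass f K l).Nonempty := by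
  obtain ⟨j⟩ := ‹Nonempty ι›
  have h := le_two_mul_card_filter_card_filter_lt_mod _ (hK j) hl
  rw [← filter_fiberRankClass_eq] at h
  have hpos : 0 < #{x | f x = f j} := by linarith [hK j]
  obtain ⟨x, hx⟩ := card_pos.1 (Nat.pos_of_mul_pos_left (hpos.trans_le h))
  exact ⟨x, mem_of_mem_filter x hx⟩

lemma disjoint_fiberRankClass (f : ι → β) (K : ℕ) {l l' : ℕ} (h : l ≠ l') :
    Disjoint (fiberRankClass f K l) (fiberRankClass f K l') :=
  disjoint_filter.2 fun _ _ hl hl' => h (hl.symm.trans hl')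

lemma sum_le_two_mul_sum_fiberRankClass {f : ι → β} {K l : ℕ}
    (hK : ∀ j, K ≤ #{x | f x = f j}) (hl : l < K) {φ : ι → ℝ} (hφ₀ : ∀ j, 0 ≤ φ j)
    (hφ : ∀ i j, f i = f j → φ i = φ j) :
    ∑ j, φ j ≤ 2 * K * ∑ j ∈ fiberRankClass f K l, φ j := by
  have hmaps (s : Finset ι) : ∀ j ∈ s, f j ∈ univ.image f :=
    fun j _ => mem_image_of_mem f (mem_univ j)
  rw [← sum_fiberwise_of_maps_to (hmaps _), ← sum_fiberwise_of_maps_to (hmaps _), mul_sum]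
  refine sum_le_sum fun b hb => ?_
  obtain ⟨j, -, rfl⟩ := mem_image.1 hb
  have hconst (s : Finset ι) : ∑ x ∈ s with f x = f j, φ x = #{x ∈ s | f x = f j} * φ j := by
    rw [sum_congr rfl fun x hx => hφ x j (mem_filter.1 hx).2, sum_const, nsmul_eq_mul]
  have hcard : (#{x | f x = f j} : ℝ) ≤ 2 * K * #{x ∈ fiberRankClass f K l | f x = f j} := by
    rw [filter_fiberRankClass_eq]
    exact_mod_cast le_two_mul_card_filter_card_filter_lt_mod _ (hK j) hl
  rw [hconst, hconst, ← mul_assoc]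
  exact mul_le_mul_of_nonneg_right hcard (hφ₀ j)

end FiberRank

namespace Matrix

lemma IsHermitian.inv_pow_le_det {n : Type*} [Fintype n] [DecidableEq n]
    {M : Matrix n n ℝ} (hM : M.IsHermitian) {c : ℝ} (hc : 0 < c)
    (h : ∀ x, x ⬝ᵥ x ≤ c * (x ⬝ᵥ M *ᵥ x)) :
    c⁻¹ ^ Fintype.card n ≤ M.det := by
  have heig : ∀ i, c⁻¹ ≤ hM.eigenvalues i := by
    intro i
    set v := hM.eigenvectorBasis i
    have hv : v.ofLp ⬝ᵥ v.ofLp = 1 := by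
      have hnorm : ‖v‖ = 1 := hM.eigenvectorBasis.orthonormal.1 i
      simpa [real_inner_self_eq_norm_sq, hnorm] using
        (EuclideanSpace.inner_eq_star_dotProduct v v).symm
    have := h v.ofLp
    rw [hM.mulVec_eigenvectorBasis, dotProduct_smul, hv, smul_eq_mul, mul_one] at this
    exact (inv_le_iff_one_le_mul₀' hc).2 this
  rw [hM.det_eq_prod_eigenvalues, ← card_univ, ← prod_const]
  exact prod_le_prod (fun _ _ => by positivity) fun i _ => heig i

lemma dotProduct_mul_transpose_mulVec {m k R : Type*} [Fintype m] [Fintype k] [CommSemiring R]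
    (P : Matrix m k R) (x : m → R) : x ⬝ᵥ (P * Pᵀ) *ᵥ x = ∑ j, (x ᵥ* P) j ^ 2 := by
  rw [← mulVec_mulVec, dotProduct_mulVec, mulVec_transpose]
  simp only [dotProduct, sq]

lemma inv_mul_mul_transpose_inv_mul_eq_one {m k R : Type*} [Fintype m] [DecidableEq m]
    [Fintype k] [CommRing R] {S : Matrix m m R} (hS : S.IsSymm) (hdet : IsUnit S.det)
    {M : Matrix m k R}
    (h : S * S = M * Mᵀ) : S⁻¹ * M * (S⁻¹ * M)ᵀ = 1 := by
  rw [transpose_mul, transpose_nonsing_inv, hS.eq, Matrix.mul_assoc, ← Matrix.mul_assoc M,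
    ← h, ← Matrix.mul_assoc, ← Matrix.mul_assoc, nonsing_inv_mul _ hdet, Matrix.one_mul,
    mul_nonsing_inv _ hdet]

lemma inv_two_mul_pow_le_det_fiberRankClass {m ι β : Type*} [Fintype m]
    [DecidableEq m] [Fintype ι] [LinearOrder ι] [DecidableEq β] {B : Matrix m ι ℝ} (hB : B * Bᵀ = 1)
    {f : ι → β} (hBf : ∀ i j, f i = f j → ∀ k, B k i = B k j) {K l : ℕ}
    (hK : ∀ j, K ≤ #{x | f x = f j}) (hl : l < K) :
    (2 * K : ℝ)⁻¹ ^ Fintype.card m ≤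
      (B.submatrix id ((↑) : fiberRankClass f K l → ι) *
        (B.submatrix id ((↑) : fiberRankClass f K l → ι))ᵀ).det := by
  set P := B.submatrix id ((↑) : fiberRankClass f K l → ι)
  have hP : (P * Pᵀ).IsHermitian := by simpa using isHermitian_mul_conjTranspose_self P
  have hK₀ : (0 : ℝ) < K := by exact_mod_cast hl.pos
  refine hP.inv_pow_le_det (by positivity) fun x => ?_
  calc x ⬝ᵥ x = ∑ j, (x ᵥ* B) j ^ 2 := by
        rw [← dotProduct_mul_transpose_mulVec, hB, one_mulVec]
    _ ≤ 2 * K * ∑ j ∈ fiberRankClass f K l, (x ᵥ* B) j ^ 2 :=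
        sum_le_two_mul_sum_fiberRankClass hK hl (fun _ => sq_nonneg _)
          fun i j h => by simp only [vecMul, dotProduct, hBf i j h]
    _ = 2 * K * (x ⬝ᵥ (P * Pᵀ) *ᵥ x) := by
        rw [dotProduct_mul_transpose_mulVec, ← sum_coe_sort]; rfl

end Matrix

theorem propertyA_of_repeated_columns_general
    (m : ℕ)
    (A : ∀ n : ℕ, Matrix (Fin m) (Fin n) ℝ)
    (b : ∀ n : ℕ, Fin m → ℝ)
    -- the barycenter weights `w`:
    (w : ∀ n : ℕ, Fin n → ℝ)
    (hw : ∀ n, m < n → (∀ j, 0 < w n j) ∧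
      (∃ u : Fin m → ℝ, w n = (A n).transpose.mulVec u) ∧
      (A n).mulVec (fun j => (w n j)⁻¹) = b n)
    -- `Ã_{ij} = A_{ij}/w_j`, `S = (ÃÃᵀ)^{1/2}`, `Â = S⁻¹Ã`:
    (Atil : ∀ n : ℕ, Matrix (Fin m) (Fin n) ℝ)
    (hAtil : ∀ n i j, Atil n i j = A n i j / w n j)
    (S : ∀ n : ℕ, Matrix (Fin m) (Fin m) ℝ)
    (hS : ∀ n, m < n → (S n).PosDef ∧ S n * S n = Atil n * (Atil n).transpose)
    (Ahat : ∀ n : ℕ, Matrix (Fin m) (Fin n) ℝ)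
    (hAhat : ∀ n, Ahat n = (S n)⁻¹ * Atil n)
    -- each column of `A` appears at least `K` times:
    (K : ℕ) (hK : 0 < K)
    (hrep : ∀ n, m < n → ∀ j : Fin n,
      K ≤ (Finset.univ.filter (fun j' : Fin n => ∀ i, A n i j' = A n i j)).card) :
    ∃ C > (0 : ℝ), ∀ n, m < n →
      ∃ I : Fin K → Finset (Fin n),
        (∀ l, (I l).Nonempty) ∧
        (∀ l l', l ≠ l' → Disjoint (I l) (I l')) ∧
        (∀ l, C ≤ (((Ahat n).submatrix id (fun j : (I l : Finset (Fin n)) => (j : Fin n))) *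
          ((Ahat n).submatrix id (fun j : (I l : Finset (Fin n)) => (j : Fin n))).transpose).det) := by
  refine ⟨(2 * K : ℝ)⁻¹ ^ m, by positivity, fun n hn => ?_⟩
  obtain ⟨hSpd, hSsq⟩ := hS n hn
  obtain ⟨u, hu⟩ := (hw n hn).2.1
  set col : Fin n → Fin m → ℝ := fun j i => A n i j
  have hAhat_orth : Ahat n * (Ahat n)ᵀ = 1 := by
    rw [hAhat]
    exact inv_mul_mul_transpose_inv_mul_eq_one (isHermitian_iff_isSymm.1 hSpd.isHermitian)
      ((S n).isUnit_iff_isUnit_det.1 hSpd.isUnit) hSsq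
  have hAhat_col : ∀ i j, col i = col j → ∀ k, Ahat n k i = Ahat n k j := by
    intro i j h k
    have hAij (k) : A n k i = A n k j := congrFun h k
    have hwij : w n i = w n j := by simp only [hu, mulVec, dotProduct, transpose_apply, hAij]
    simp only [hAhat, mul_apply, hAtil, hwij, hAij]
  have hmult : ∀ j, K ≤ #{x | col x = col j} := fun j => by
    simpa only [col, funext_iff] using hrep n hn j
  have : Nonempty (Fin n) := ⟨⟨0, by omega⟩⟩
  refine ⟨fun l => fiberRankClass col K l, fun l => fiberRankClass_nonempty hmult l.isLt,
    fun l l' h => disjoint_fiberRankClass col K (Fin.val_ne_of_ne h), fun l => ?_⟩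
  simpa using inv_two_mul_pow_le_det_fiberRankClass hAhat_orth hAhat_col hmult l.isLt

/-- **Repeated columns imply Property A.**
Let `K ∈ ℕ`, and suppose every column of `A` appears at least `K` times among the
columns of `A`.  Then Property A holds for this `K`: there is a constant `C > 0`,
independent of `n`, such that for every `n` there are pairwise disjoint non-empty
subsets `I₁, …, I_K ⊆ {1, …, n}` with `det(Â_{I_l} (Â_{I_l})ᵀ) ≥ C` for every `l`. -/
theorem propertyA_of_repeated_columns
    (m : ℕ) (hm : 0 < m)
    (A : ∀ n : ℕ, Matrix (Fin m) (Fin n) ℝ)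
    (b : ∀ n : ℕ, Fin m → ℝ)
    (hApos : ∀ n, ∀ i j, 0 < A n i j)
    (hbpos : ∀ n, ∀ i, 0 < b n i)
    (hArank : ∀ n, m < n → (A n).rank = m)
    (hint : ∀ n, m < n → ∃ x : Fin n → ℝ, (∀ j, 0 < x j) ∧ (A n).mulVec x = b n)
    -- the barycenter weights `w`:
    (w : ∀ n : ℕ, Fin n → ℝ)
    (hw : ∀ n, m < n → (∀ j, 0 < w n j) ∧
      (∃ u : Fin m → ℝ, w n = (A n).transpose.mulVec u) ∧
      (A n).mulVec (fun j => (w n j)⁻¹) = b n)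
    -- `Ã_{ij} = A_{ij}/w_j`, `S = (ÃÃᵀ)^{1/2}`, `Â = S⁻¹Ã`:
    (Atil : ∀ n : ℕ, Matrix (Fin m) (Fin n) ℝ)
    (hAtil : ∀ n i j, Atil n i j = A n i j / w n j)
    (S : ∀ n : ℕ, Matrix (Fin m) (Fin m) ℝ)
    (hS : ∀ n, m < n → (S n).PosDef ∧ S n * S n = Atil n * (Atil n).transpose)
    (Ahat : ∀ n : ℕ, Matrix (Fin m) (Fin n) ℝ)
    (hAhat : ∀ n, Ahat n = (S n)⁻¹ * Atil n)
    -- each column of `A` appears at least `K` times: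
    (K : ℕ) (hK : 0 < K)
    (hrep : ∀ n, m < n → ∀ j : Fin n,
      K ≤ (Finset.univ.filter (fun j' : Fin n => ∀ i, A n i j' = A n i j)).card) :
    ∃ C > (0 : ℝ), ∀ n, m < n →
      ∃ I : Fin K → Finset (Fin n),
        (∀ l, (I l).Nonempty) ∧
        (∀ l l', l ≠ l' → Disjoint (I l) (I l')) ∧
        (∀ l, C ≤ (((Ahat n).submatrix id (fun j : (I l : Finset (Fin n)) => (j : Fin n))) *
          ((Ahat n).submatrix id (fun j : (I l : Finset (Fin n)) => (j : Fin n))).transpose).det) :=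
  propertyA_of_repeated_columns_general m A b w hw Atil hAtil S hS Ahat hAhat K hK hrep
end

section
/- Suppose that the minimal multiplicity of the columns of A^{(n)} tends to infinity as n → ∞, i.e. for every column of A^{(n)} the number of columns of A^{(n)} equal to it goes to infinity uniformly as n → ∞. Then ‖Â^{(n)}‖_max → 0 as n → ∞. -/
/-- **Diverging column multiplicities imply `‖Â‖_max → 0`.**
If the minimal multiplicity of the columns of `A^{(n)}` tends to infinity, i.e. for every
`R` there is an `N` such that for all `n ≥ N` every column of `A^{(n)}` is repeated at
least `R` times, then the maximal entry of `Â = (ÃÃᵀ)^{-1/2}Ã` tends to `0` as `n → ∞`. -/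
theorem Ahat_max_tendsto_zero_of_multiplicities_tendsto_top
    (m : ℕ) (hm : 0 < m)
    (A : ∀ n : ℕ, Matrix (Fin m) (Fin n) ℝ)
    (b : ∀ n : ℕ, Fin m → ℝ)
    (hApos : ∀ n, ∀ i j, 0 < A n i j)
    (hbpos : ∀ n, ∀ i, 0 < b n i)
    (hArank : ∀ n, m < n → (A n).rank = m)
    (hint : ∀ n, m < n → ∃ x : Fin n → ℝ, (∀ j, 0 < x j) ∧ (A n).mulVec x = b n)
    -- the barycenter weights `w`:
    (w : ∀ n : ℕ, Fin n → ℝ)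
    (hw : ∀ n, m < n → (∀ j, 0 < w n j) ∧
      (∃ u : Fin m → ℝ, w n = (A n).transpose.mulVec u) ∧
      (A n).mulVec (fun j => (w n j)⁻¹) = b n)
    -- `Ã_{ij} = A_{ij}/w_j`, `S = (ÃÃᵀ)^{1/2}`, `Â = S⁻¹Ã`:
    (Atil : ∀ n : ℕ, Matrix (Fin m) (Fin n) ℝ)
    (hAtil : ∀ n i j, Atil n i j = A n i j / w n j)
    (S : ∀ n : ℕ, Matrix (Fin m) (Fin m) ℝ)
    (hS : ∀ n, m < n → (S n).PosDef ∧ S n * S n = Atil n * (Atil n).transpose)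
    (Ahat : ∀ n : ℕ, Matrix (Fin m) (Fin n) ℝ)
    (hAhat : ∀ n, Ahat n = (S n)⁻¹ * Atil n)
    -- the minimal column multiplicity tends to infinity:
    (hmult : ∀ R : ℕ, ∃ N, ∀ n ≥ N, ∀ j : Fin n,
      R ≤ (Finset.univ.filter (fun j' : Fin n => ∀ i, A n i j' = A n i j)).card) :
    ∀ ε > (0 : ℝ), ∃ N, ∀ n ≥ N, ∀ i j, |Ahat n i j| < ε := by
  intro ε hε
  have hε2 : (0 : ℝ) < ε ^ 2 := by positivity
  obtain ⟨R, hR⟩ := exists_nat_gt ((ε ^ 2)⁻¹)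
  obtain ⟨N, hN⟩ := hmult R
  refine ⟨max N (m + 1), fun n hn i j => ?_⟩
  have hnN : N ≤ n := le_trans (le_max_left _ _) hn
  have hmn : m < n := lt_of_lt_of_le (Nat.lt_succ_self m) (le_trans (le_max_right _ _) hn)
  obtain ⟨hSpd, hSS⟩ := hS n hmn
  have hdet : IsUnit (S n).det := isUnit_iff_ne_zero.mpr hSpd.det_pos.ne'
  have hsym : (S n).transpose = S n := by
    ext i' k
    have h := congrFun (congrFun hSpd.isHermitian.eq i') k
    simpa [Matrix.conjTranspose_apply] using h
  have hinv : (S n)⁻¹ * S n = 1 := Matrix.nonsing_inv_mul _ hdet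
  have hinv' : S n * (S n)⁻¹ = 1 := Matrix.mul_nonsing_inv _ hdet
  have htinv : ((S n)⁻¹).transpose = (S n)⁻¹ := by
    rw [Matrix.transpose_nonsing_inv, hsym]
  have hortho : Ahat n * (Ahat n).transpose = 1 := by
    rw [hAhat, Matrix.transpose_mul, htinv]
    calc (S n)⁻¹ * Atil n * ((Atil n).transpose * (S n)⁻¹)
        = (S n)⁻¹ * (Atil n * (Atil n).transpose * (S n)⁻¹) := by
          rw [Matrix.mul_assoc, Matrix.mul_assoc]
      _ = (S n)⁻¹ * (S n * S n * (S n)⁻¹) := by rw [hSS]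
      _ = (S n)⁻¹ * (S n * (S n * (S n)⁻¹)) := by rw [Matrix.mul_assoc]
      _ = 1 := by rw [hinv', Matrix.mul_one, hinv]
  have hsum : ∑ j' : Fin n, Ahat n i j' * Ahat n i j' = 1 := by
    have h := congrFun (congrFun hortho i) i
    simpa [Matrix.mul_apply, Matrix.transpose_apply, Matrix.one_apply] using h
  obtain ⟨hwpos, ⟨u, hu⟩, -⟩ := hw n hmn
  have hcol : ∀ j' : Fin n, (∀ i', A n i' j' = A n i' j) → Ahat n i j' = Ahat n i j := by
    intro j' hj'
    have hwj : w n j' = w n j := by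
      rw [hu]
      simp only [Matrix.mulVec, Matrix.transpose_apply, dotProduct]
      exact Finset.sum_congr rfl fun i' _ => by show A n i' j' * u i' = A n i' j * u i'; rw [hj' i']
    have hAtilj : ∀ i', Atil n i' j' = Atil n i' j := fun i' => by
      rw [hAtil, hAtil, hj' i', hwj]
    rw [hAhat]
    simp only [Matrix.mul_apply]
    exact Finset.sum_congr rfl fun k _ => by rw [hAtilj k]
  set T := Finset.univ.filter (fun j' : Fin n => ∀ i', A n i' j' = A n i' j) with hT
  have hTsum : ∑ j' ∈ T, Ahat n i j' * Ahat n i j'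
      = (T.card : ℝ) * (Ahat n i j * Ahat n i j) := by
    rw [Finset.sum_congr rfl (fun j' hj' => by
      rw [hcol j' (Finset.mem_filter.mp hj').2])]
    rw [Finset.sum_const, nsmul_eq_mul]
  have hle : ∑ j' ∈ T, Ahat n i j' * Ahat n i j' ≤ 1 := by
    rw [← hsum]
    exact Finset.sum_le_sum_of_subset_of_nonneg (Finset.subset_univ T)
      (fun j' _ _ => mul_self_nonneg _)
  have hcard : (R : ℝ) ≤ (T.card : ℝ) := by
    exact_mod_cast hN n hnN j
  have hRpos : (0 : ℝ) < R := lt_of_le_of_lt (inv_nonneg.mpr hε2.le) hR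
  have hx : (R : ℝ) * (Ahat n i j * Ahat n i j) ≤ 1 := by
    calc (R : ℝ) * (Ahat n i j * Ahat n i j)
        ≤ (T.card : ℝ) * (Ahat n i j * Ahat n i j) :=
          mul_le_mul_of_nonneg_right hcard (mul_self_nonneg _)
      _ ≤ 1 := by rw [← hTsum]; exact hle
  have h1 : 1 < (R : ℝ) * ε ^ 2 := by
    have h := mul_lt_mul_of_pos_right hR hε2
    rwa [inv_mul_cancel₀ hε2.ne'] at h
  have hxx : Ahat n i j * Ahat n i j < ε ^ 2 :=
    lt_of_mul_lt_mul_left (lt_of_le_of_lt hx h1) hRpos.le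
  nlinarith [abs_nonneg (Ahat n i j), sq_abs (Ahat n i j), hε]
end
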